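/- arXiv:2411.13083 — 3 statements merged into one kernel-verified Lean document; each statement's English description precedes it below -/
import Mathlib

section
/- There exists a universal constant C > 0 such that the following holds. Let D be any probability distribution on ℝ × {0,1}, let δ ∈ (0, 1/3), and let n ≥ 2. Then with probability at least 1 − δ over i.i.d. samples (x_1, y_1), …, (x_n, y_n) from D: for every non-decreasing ξ : ℝ → [−1,1] and every non-decreasing p : ℝ → [0,1], |E_{(x,y)∼D}[(p(x) − y)·ξ(x)] − (1/n)·Σ_{i=1}^n (p(x_i) − y_i)·ξ(x_i)| ≤ C·√((log n + log(1/δ))/n). -/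
open MeasureTheory

/-- The label of an outcome `b ∈ {0,1}`, as a real number. -/
def label (b : Bool) : ℝ := if b then 1 else 0

section Auxiliary

open Real Set Filter Topology
open scoped ENNReal

set_option linter.unusedSectionVars false
set_option linter.unusedVariables false

section BddChernoff

variable {Ω : Type*} [MeasurableSpace Ω]

variable {Ω : Type*} [MeasurableSpace Ω]

lemma integrable_of_bdd {μ : Measure Ω} [IsFiniteMeasure μ] {f : Ω → ℝ} (hm : Measurable f)
    {C : ℝ} (h : ∀ z, |f z| ≤ C) : Integrable f μ :=
  (integrable_const C).mono' hm.aestronglyMeasurable (Filter.Eventually.of_forall h)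

lemma chord (t z : ℝ) (h1 : -1 ≤ z) (h2 : z ≤ 1) :
    Real.exp (t * z) ≤ Real.cosh t + z * Real.sinh t := by
  have h := convexOn_exp.2 (Set.mem_univ (-t)) (Set.mem_univ t)
    (by linarith : (0:ℝ) ≤ (1 - z)/2) (by linarith : (0:ℝ) ≤ (1 + z)/2) (by ring)
  simp only [smul_eq_mul] at h
  have e1 : (1 - z)/2 * (-t) + (1 + z)/2 * t = t * z := by ring
  rw [e1] at h
  rw [Real.cosh_eq, Real.sinh_eq]
  nlinarith [h]

lemma mgf_single (μ : Measure Ω) [IsProbabilityMeasure μ] {f : Ω → ℝ} (hm : Measurable f)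
    (h0 : ∀ z, 0 ≤ f z) (h1 : ∀ z, f z ≤ 1) (t : ℝ) :
    ∫ z, Real.exp (t * (f z - ∫ w, f w ∂μ)) ∂μ ≤ Real.exp (t^2/2) := by
  set m := ∫ w, f w ∂μ with hmdef
  have hint : Integrable f μ := integrable_of_bdd hm (C := 1)
    (fun z => abs_le.2 ⟨by linarith [h0 z], h1 z⟩)
  have hm0 : 0 ≤ m := integral_nonneg h0
  have hm1 : m ≤ 1 := by
    calc m ≤ ∫ _, (1:ℝ) ∂μ := integral_mono hint (integrable_const 1) h1
    _ = 1 := by simp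
  have key : ∀ z, Real.exp (t * (f z - m)) ≤ Real.cosh t + (f z - m) * Real.sinh t := by
    intro z
    exact chord t _ (by linarith [h0 z]) (by linarith [h1 z])
  have hintl : Integrable (fun z => Real.exp (t * (f z - m))) μ := by
    apply integrable_of_bdd (by fun_prop)
    intro z
    rw [abs_of_nonneg (Real.exp_nonneg _)]
    exact Real.exp_le_exp.2 (by
      calc t * (f z - m) ≤ |t * (f z - m)| := le_abs_self _
      _ = |t| * |f z - m| := abs_mul _ _
      _ ≤ |t| * 1 := by
          apply mul_le_mul_of_nonneg_left _ (abs_nonneg t)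
          exact abs_le.2 ⟨by linarith [h0 z], by linarith [h1 z]⟩
      _ = |t| := mul_one _)
  calc ∫ z, Real.exp (t * (f z - m)) ∂μ
      ≤ ∫ z, (Real.cosh t + (f z - m) * Real.sinh t) ∂μ := by
        apply integral_mono hintl _ key
        exact (integrable_const _).add ((hint.sub (integrable_const m)).mul_const _)
    _ = Real.cosh t + (∫ z, (f z - m) ∂μ) * Real.sinh t := by
        have hint2 : Integrable (fun z => (f z - m) * Real.sinh t) μ := by
          have := (hint.sub (integrable_const m)).mul_const (Real.sinh t)
          exact this
        rw [integral_add (integrable_const _) hint2, integral_const,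
          integral_mul_const]
        simp
    _ = Real.cosh t := by
        rw [integral_sub hint (integrable_const m), integral_const]
        simp [hmdef]
    _ ≤ Real.exp (t^2/2) := Real.cosh_le_exp_half_sq t




/-- One-sided Chernoff for i.i.d. `[0,1]`-valued observables under a pi measure. -/
lemma chernoff_one_sided (D : Measure Ω) [IsProbabilityMeasure D] (n : ℕ)
    {f : Ω → ℝ} (hmf : Measurable f) (h0 : ∀ z, 0 ≤ f z) (h1 : ∀ z, f z ≤ 1)
    {ε : ℝ} (hε : 0 ≤ ε) (σ : ℝ) (hσ : σ = 1 ∨ σ = -1) :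
    ((Measure.pi fun _ : Fin n => D)
      {s | (n:ℝ) * ε ≤ σ * (∑ i : Fin n, (f (s i) - ∫ w, f w ∂D))}).toReal
      ≤ Real.exp (-(n:ℝ) * ε^2 / 2) := by
  letI : MeasureSpace Ω := ⟨D⟩
  haveI : IsProbabilityMeasure (volume : Measure Ω) := ‹IsProbabilityMeasure D›
  set m := ∫ w, f w ∂D with hmdef
  set X : (Fin n → Ω) → ℝ := fun s => σ * (∑ i : Fin n, (f (s i) - m)) with hX
  set P := (Measure.pi fun _ : Fin n => D) with hP
  have hm0 : 0 ≤ m := integral_nonneg h0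
  have hm1 : m ≤ 1 := by
    calc m ≤ ∫ _, (1:ℝ) ∂D := integral_mono (integrable_of_bdd hmf
      (fun z => abs_le.2 ⟨by linarith [h0 z], h1 z⟩)) (integrable_const 1) h1
    _ = 1 := by simp
  haveI : IsProbabilityMeasure P := by rw [hP]; infer_instance
  have hXm : Measurable X := by
    apply Measurable.const_mul
    exact Finset.measurable_sum _ (fun i _ => (hmf.comp (measurable_pi_apply i)).sub measurable_const)
  have hXbdd : ∀ s, |X s| ≤ (n:ℝ) := by
    intro s
    rw [hX, abs_mul]
    have : |σ| = 1 := by rcases hσ with h | h <;> simp [h]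
    rw [this, one_mul]
    calc |∑ i : Fin n, (f (s i) - m)| ≤ ∑ i : Fin n, |f (s i) - m| := Finset.abs_sum_le_sum_abs _ _
    _ ≤ ∑ _i : Fin n, (1:ℝ) := Finset.sum_le_sum (fun i _ =>
        abs_le.2 ⟨by linarith [h0 (s i)], by linarith [h1 (s i)]⟩)
    _ = n := by simp
  have hint : Integrable (fun s => Real.exp (ε * X s)) P := by
    apply integrable_of_bdd (by fun_prop)
    intro s
    rw [abs_of_nonneg (Real.exp_nonneg _)]
    apply Real.exp_le_exp.2
    calc ε * X s ≤ |ε * X s| := le_abs_self _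
    _ = ε * |X s| := by rw [abs_mul, abs_of_nonneg hε]
    _ ≤ ε * n := mul_le_mul_of_nonneg_left (hXbdd s) hε
  have chern := ProbabilityTheory.measure_ge_le_exp_mul_mgf (X := X) (μ := P) (t := ε)
    ((n:ℝ) * ε) hε hint
  refine chern.trans ?_
  have hmgf : ProbabilityTheory.mgf X P ε = (∫ z, Real.exp (ε * (σ * (f z - m))) ∂D) ^ n := by
    rw [ProbabilityTheory.mgf]
    have heq : ∀ s : Fin n → Ω, Real.exp (ε * X s)
        = ∏ i : Fin n, Real.exp (ε * (σ * (f (s i) - m))) := by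
      intro s
      rw [← Real.exp_sum]
      congr 1
      show ε * (σ * ∑ i : Fin n, (f (s i) - m)) = _
      rw [Finset.mul_sum, Finset.mul_sum]
    calc ∫ s, Real.exp (ε * X s) ∂P = ∫ s : Fin n → Ω, ∏ i : Fin n,
          Real.exp (ε * (σ * (f (s i) - m))) ∂P := integral_congr_ae (Filter.Eventually.of_forall heq)
    _ = (∫ z, Real.exp (ε * (σ * (f z - m))) ∂D) ^ n := by
        have hvol : (Measure.pi fun _ : Fin n => D) = (volume : Measure (Fin n → Ω)) :=
          MeasureTheory.volume_pi.symm
        rw [hP, hvol]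
        have := MeasureTheory.integral_fintype_prod_eq_pow (ι := Fin n) (μ := D)
          (fun z => Real.exp (ε * (σ * (f z - m))))
        simpa [hvol] using this
  have h1 : ∫ z, Real.exp (ε * (σ * (f z - m))) ∂D ≤ Real.exp (ε^2/2) := by
    rcases hσ with h | h
    · have := mgf_single D hmf h0 h1 ε
      rw [← hmdef] at this
      refine le_trans (le_of_eq ?_) this
      apply integral_congr_ae (Filter.Eventually.of_forall (fun z => ?_))
      rw [h]; ring_nf
    · have := mgf_single D hmf h0 h1 (-ε)
      rw [← hmdef] at this
      refine le_trans (le_of_eq ?_) (this.trans (by rw [neg_pow]; norm_num))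
      apply integral_congr_ae (Filter.Eventually.of_forall (fun z => ?_))
      rw [h]; ring_nf
  calc Real.exp (-ε * ((n:ℝ) * ε)) * ProbabilityTheory.mgf X P ε
      ≤ Real.exp (-ε * ((n:ℝ) * ε)) * Real.exp (ε^2/2) ^ n := by
        apply mul_le_mul_of_nonneg_left _ (Real.exp_nonneg _)
        rw [hmgf]
        exact pow_le_pow_left₀ (integral_nonneg (fun z => Real.exp_nonneg _)) h1 n
    _ = Real.exp (-(n:ℝ) * ε^2 / 2) := by
        rw [← Real.exp_nat_mul, ← Real.exp_add]
        congr 1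
        ring

/-- Two-sided Chernoff bound for the empirical mean under a pi measure. -/
lemma chernoff_two_sided (D : Measure Ω) [IsProbabilityMeasure D] (n : ℕ)
    {f : Ω → ℝ} (hmf : Measurable f) (h0 : ∀ z, 0 ≤ f z) (h1 : ∀ z, f z ≤ 1)
    {ε : ℝ} (hε : 0 ≤ ε) :
    (Measure.pi fun _ : Fin n => D)
      {s | ε ≤ |(1/(n:ℝ)) * (∑ i : Fin n, f (s i)) - ∫ w, f w ∂D|}
      ≤ ENNReal.ofReal (2 * Real.exp (-(n:ℝ) * ε^2 / 2)) := by
  set m := ∫ w, f w ∂D with hmdef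
  set P := (Measure.pi fun _ : Fin n => D) with hP
  have hsub : {s : Fin n → Ω | ε ≤ |(1/(n:ℝ)) * (∑ i : Fin n, f (s i)) - m|}
      ⊆ {s | (n:ℝ) * ε ≤ (1:ℝ) * (∑ i : Fin n, (f (s i) - m))}
        ∪ {s | (n:ℝ) * ε ≤ (-1:ℝ) * (∑ i : Fin n, (f (s i) - m))} := by
    intro s hs
    simp only [Set.mem_setOf_eq] at hs
    rcases Nat.eq_zero_or_pos n with h | hnpos
    · subst h
      simp only [Nat.cast_zero, Finset.univ_eq_empty, Finset.sum_empty] at hs ⊢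
      left; simp only [Set.mem_setOf_eq, Finset.univ_eq_empty, Finset.sum_empty,
        Nat.cast_zero, zero_mul, mul_zero, le_refl]
    have hkey : (1/(n:ℝ)) * (∑ i : Fin n, f (s i)) - m
        = (1/(n:ℝ)) * (∑ i : Fin n, (f (s i) - m)) := by
      rw [Finset.sum_sub_distrib, Finset.sum_const, Finset.card_univ, Fintype.card_fin, nsmul_eq_mul]
      have hn' : (n:ℝ) ≠ 0 := Nat.cast_ne_zero.2 hnpos.ne'
      field_simp
    rw [hkey] at hs
    have hnn : (0:ℝ) < n := Nat.cast_pos.2 hnpos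
    have habs : (n:ℝ) * ε ≤ |∑ i : Fin n, (f (s i) - m)| := by
      rw [abs_mul, abs_of_pos (by positivity : (0:ℝ) < 1/(n:ℝ))] at hs
      calc (n:ℝ) * ε ≤ (n:ℝ) * ((1/(n:ℝ)) * |∑ i : Fin n, (f (s i) - m)|) := by
            exact mul_le_mul_of_nonneg_left hs hnn.le
        _ = |∑ i : Fin n, (f (s i) - m)| := by field_simp
    rcases abs_le.1 (le_refl |∑ i : Fin n, (f (s i) - m)|) with _
    rcases le_or_gt 0 (∑ i : Fin n, (f (s i) - m)) with hpos | hneg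
    · left
      simp only [Set.mem_setOf_eq, one_mul]
      rwa [abs_of_nonneg hpos] at habs
    · right
      simp only [Set.mem_setOf_eq, neg_one_mul]
      rwa [abs_of_neg hneg] at habs
  calc P {s | ε ≤ |(1/(n:ℝ)) * (∑ i : Fin n, f (s i)) - m|}
      ≤ P ({s | (n:ℝ) * ε ≤ (1:ℝ) * (∑ i : Fin n, (f (s i) - m))}
        ∪ {s | (n:ℝ) * ε ≤ (-1:ℝ) * (∑ i : Fin n, (f (s i) - m))}) := measure_mono hsub
    _ ≤ P {s | (n:ℝ) * ε ≤ (1:ℝ) * (∑ i : Fin n, (f (s i) - m))}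
        + P {s | (n:ℝ) * ε ≤ (-1:ℝ) * (∑ i : Fin n, (f (s i) - m))} := measure_union_le _ _
    _ ≤ ENNReal.ofReal (Real.exp (-(n:ℝ) * ε^2 / 2)) + ENNReal.ofReal (Real.exp (-(n:ℝ) * ε^2 / 2)) := by
        gcongr
        · rw [← ENNReal.ofReal_toReal (measure_ne_top P _)]
          exact ENNReal.ofReal_le_ofReal
            (chernoff_one_sided D n hmf h0 h1 hε 1 (Or.inl rfl))
        · rw [← ENNReal.ofReal_toReal (measure_ne_top P _)]
          exact ENNReal.ofReal_le_ofReal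
            (chernoff_one_sided D n hmf h0 h1 hε (-1) (Or.inr rfl))
    _ = ENNReal.ofReal (2 * Real.exp (-(n:ℝ) * ε^2 / 2)) := by
        rw [← ENNReal.ofReal_add (Real.exp_nonneg _) (Real.exp_nonneg _)]
        congr 1
        ring

end BddChernoff

section Emp

variable {α : Type*} [MeasurableSpace α] [MeasurableSingletonClass α]


noncomputable def emp (n : ℕ) (s : Fin n → α) : Measure α :=
  (n : ℝ≥0∞)⁻¹ • ∑ i : Fin n, Measure.dirac (s i)

lemma emp_isProb (n : ℕ) (hn : n ≠ 0) (s : Fin n → α) : IsProbabilityMeasure (emp n s) := by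
  constructor
  rw [emp, Measure.smul_apply, Measure.finset_sum_apply]
  simp only [measure_univ, Finset.sum_const, Finset.card_univ, Fintype.card_fin, nsmul_eq_mul,
    mul_one, smul_eq_mul]
  rw [ENNReal.inv_mul_cancel]
  · exact Nat.cast_ne_zero.2 hn
  · exact ENNReal.natCast_ne_top n

lemma emp_apply (n : ℕ) (hn : n ≠ 0) (s : Fin n → α) {A : Set α} (hA : MeasurableSet A) :
    ((emp n s) A).toReal = (1/(n:ℝ)) * ∑ i : Fin n, A.indicator (fun _ => (1:ℝ)) (s i) := by
  rw [emp, Measure.smul_apply, Measure.finset_sum_apply, smul_eq_mul, ENNReal.toReal_mul]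
  congr 1
  · simp [ENNReal.toReal_inv]
  · rw [ENNReal.toReal_sum (fun i _ => by
      rw [Measure.dirac_apply' _ hA]
      by_cases h : s i ∈ A <;> simp [h])]
    apply Finset.sum_congr rfl
    intro i _
    rw [Measure.dirac_apply' _ hA]
    by_cases h : s i ∈ A <;> simp [h]

lemma emp_integral (n : ℕ) (hn : n ≠ 0) (s : Fin n → α) (h : α → ℝ) (hmh : Measurable h)
    {C : ℝ} (hb : ∀ z, |h z| ≤ C) :
    ∫ z, h z ∂(emp n s) = (1/(n:ℝ)) * ∑ i : Fin n, h (s i) := by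
  rw [emp, integral_smul_measure, integral_finset_sum_measure (fun i _ =>
    integrable_of_bdd hmh hb)]
  simp only [integral_dirac, ENNReal.toReal_inv, ENNReal.toReal_natCast, smul_eq_mul, one_div]

end Emp

section Grid

variable (ν : Measure ℝ) [IsProbabilityMeasure ν] (n : ℕ)

/-- The `k/n`-quantile of `ν`. -/
noncomputable def quant' (k : ℕ) : ℝ :=
  sInf {x : ℝ | (k:ℝ)/n ≤ (ν (Iic x)).toReal}

variable {ν n}

lemma F_mono {x y : ℝ} (h : x ≤ y) : (ν (Iic x)).toReal ≤ (ν (Iic y)).toReal :=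
  ENNReal.toReal_mono (measure_ne_top ν _) (measure_mono (Iic_subset_Iic.2 h))

lemma quant_nonempty (hn : 0 < n) {k : ℕ} (hk : k ≤ n - 1) :
    {x : ℝ | (k:ℝ)/n ≤ (ν (Iic x)).toReal}.Nonempty := by
  have hkn : (k:ℝ)/n < 1 := by
    rw [div_lt_one (by exact_mod_cast hn)]
    exact_mod_cast Nat.lt_of_le_of_lt hk (Nat.sub_lt hn one_pos)
  have hun : (⋃ j : ℕ, Iic (j:ℝ)) = univ := by
    ext x
    simp only [mem_iUnion, mem_Iic, mem_univ, iff_true]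
    obtain ⟨j, hj⟩ := exists_nat_gt x
    exact ⟨j, hj.le⟩
  have htend : Tendsto (fun j : ℕ => ν (Iic (j:ℝ))) atTop (𝓝 1) := by
    have h2 := tendsto_measure_iUnion_atTop (μ := ν)
      (s := fun j : ℕ => Iic (j:ℝ))
      (fun a b hab => Iic_subset_Iic.2 (by exact_mod_cast hab))
    rw [hun] at h2
    simpa [measure_univ, Function.comp_def] using h2
  have hlt : ENNReal.ofReal ((k:ℝ)/n) < 1 := by
    rw [← ENNReal.ofReal_one]
    exact ENNReal.ofReal_lt_ofReal_iff_of_nonneg (by positivity) |>.2 hkn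
  obtain ⟨j, hj⟩ := (htend.eventually_const_lt hlt).exists
  refine ⟨(j:ℝ), ?_⟩
  rw [mem_setOf_eq, ← ENNReal.ofReal_le_iff_le_toReal (measure_ne_top ν _)]
  exact hj.le

lemma quant_bddBelow (hn : 0 < n) {k : ℕ} (hk1 : 1 ≤ k) :
    BddBelow {x : ℝ | (k:ℝ)/n ≤ (ν (Iic x)).toReal} := by
  have hkn : (0:ℝ) < (k:ℝ)/n := by positivity
  have hin : (⋂ j : ℕ, Iic (-(j:ℝ))) = ∅ := by
    ext x
    simp only [mem_iInter, mem_Iic, mem_empty_iff_false, iff_false, not_forall, not_le]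
    obtain ⟨j, hj⟩ := exists_nat_gt (-x)
    exact ⟨j, by linarith⟩
  have htend : Tendsto (fun j : ℕ => ν (Iic (-(j:ℝ)))) atTop (𝓝 0) := by
    have h2 := tendsto_measure_iInter_atTop (μ := ν)
      (s := fun j : ℕ => Iic (-(j:ℝ)))
      (fun j => measurableSet_Iic.nullMeasurableSet)
      (fun a b hab => Iic_subset_Iic.2 (by exact_mod_cast neg_le_neg (by exact_mod_cast hab)))
      ⟨0, measure_ne_top ν _⟩
    rw [hin] at h2
    simpa [Function.comp_def] using h2
  have hlt : (0:ℝ≥0∞) < ENNReal.ofReal ((k:ℝ)/n) := ENNReal.ofReal_pos.2 hkn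
  obtain ⟨j, hj⟩ := (htend.eventually_lt_const hlt).exists
  refine ⟨-(j:ℝ), fun y hy => ?_⟩
  by_contra hcon
  push_neg at hcon
  rw [mem_setOf_eq] at hy
  have : (ν (Iic y)).toReal < (k:ℝ)/n := by
    have h1 : (ν (Iic y)).toReal ≤ (ν (Iic (-(j:ℝ)))).toReal := F_mono hcon.le
    have h2 : (ν (Iic (-(j:ℝ)))).toReal < (k:ℝ)/n := by
      have := ENNReal.toReal_strict_mono (by simp [ENNReal.ofReal_ne_top]) hj
      rwa [ENNReal.toReal_ofReal hkn.le] at this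
    linarith
  linarith

lemma quant_cdf_ge (hn : 0 < n) {k : ℕ} (hk1 : 1 ≤ k) (hk : k ≤ n - 1) :
    (k:ℝ)/n ≤ (ν (Iic (quant' ν n k))).toReal := by
  set S := {x : ℝ | (k:ℝ)/n ≤ (ν (Iic x)).toReal} with hS
  have hSup : ∀ x, quant' ν n k < x → x ∈ S := by
    intro x hx
    obtain ⟨y, hyS, hyx⟩ := exists_lt_of_csInf_lt (quant_nonempty hn hk) hx
    exact le_trans hyS (F_mono hyx.le)
  have hiInter : Iic (quant' ν n k) = ⋂ j : ℕ, Iic (quant' ν n k + 1/((j:ℝ)+1)) := by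
    ext x
    simp only [mem_iInter, mem_Iic]
    constructor
    · intro h j
      have : (0:ℝ) < 1/((j:ℝ)+1) := by positivity
      linarith
    · intro h
      by_contra hcon
      push_neg at hcon
      obtain ⟨j, hj⟩ := exists_nat_one_div_lt (by linarith : (0:ℝ) < x - quant' ν n k)
      have := h j
      linarith
  have htend : Tendsto (fun j : ℕ => ν (Iic (quant' ν n k + 1/((j:ℝ)+1)))) atTop
      (𝓝 (ν (Iic (quant' ν n k)))) := by
    rw [hiInter]
    apply tendsto_measure_iInter_atTop
      (fun j => measurableSet_Iic.nullMeasurableSet) _ ⟨0, measure_ne_top ν _⟩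
    intro a b hab
    apply Iic_subset_Iic.2
    have : 1/((b:ℝ)+1) ≤ 1/((a:ℝ)+1) := by
      apply one_div_le_one_div_of_le (by positivity)
      exact_mod_cast add_le_add_left (Nat.cast_le.2 hab) 1
    linarith
  have hge : ENNReal.ofReal ((k:ℝ)/n) ≤ ν (Iic (quant' ν n k)) := by
    apply ge_of_tendsto htend
    apply Eventually.of_forall
    intro j
    have hmem : quant' ν n k + 1/((j:ℝ)+1) ∈ S := hSup _ (by
      have : (0:ℝ) < 1/((j:ℝ)+1) := by positivity
      linarith)
    rw [hS, mem_setOf_eq] at hmem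
    rwa [ENNReal.ofReal_le_iff_le_toReal (measure_ne_top ν _)]
  rwa [← ENNReal.ofReal_le_iff_le_toReal (measure_ne_top ν _)]

lemma quant_cdf_lt (hn : 0 < n) {k : ℕ} (hk1 : 1 ≤ k) (hk : k ≤ n - 1) :
    (ν (Iio (quant' ν n k))).toReal ≤ (k:ℝ)/n := by
  have hnotmem : ∀ x, x < quant' ν n k → (ν (Iic x)).toReal < (k:ℝ)/n := by
    intro x hx
    by_contra hcon
    push_neg at hcon
    exact absurd (csInf_le (quant_bddBelow hn hk1) hcon) (not_le.2 hx)
  have hiUnion : Iio (quant' ν n k) = ⋃ j : ℕ, Iic (quant' ν n k - 1/((j:ℝ)+1)) := by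
    ext x
    simp only [mem_iUnion, mem_Iic, mem_Iio]
    constructor
    · intro h
      obtain ⟨j, hj⟩ := exists_nat_one_div_lt (by linarith : (0:ℝ) < quant' ν n k - x)
      exact ⟨j, by linarith⟩
    · intro ⟨j, hj⟩
      have : (0:ℝ) < 1/((j:ℝ)+1) := by positivity
      linarith
  have htend : Tendsto (fun j : ℕ => ν (Iic (quant' ν n k - 1/((j:ℝ)+1)))) atTop
      (𝓝 (ν (Iio (quant' ν n k)))) := by
    rw [hiUnion]
    apply tendsto_measure_iUnion_atTop
    intro a b hab
    apply Iic_subset_Iic.2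
    have : 1/((b:ℝ)+1) ≤ 1/((a:ℝ)+1) := by
      apply one_div_le_one_div_of_le (by positivity)
      exact_mod_cast add_le_add_left (Nat.cast_le.2 hab) 1
    linarith
  have hle : ν (Iio (quant' ν n k)) ≤ ENNReal.ofReal ((k:ℝ)/n) := by
    apply le_of_tendsto htend
    apply Eventually.of_forall
    intro j
    have hlt : (ν (Iic (quant' ν n k - 1/((j:ℝ)+1)))).toReal < (k:ℝ)/n := by
      apply hnotmem
      have : (0:ℝ) < 1/((j:ℝ)+1) := by positivity
      linarith
    rw [ENNReal.le_ofReal_iff_toReal_le (measure_ne_top ν _) (by positivity)]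
    exact hlt.le
  calc (ν (Iio (quant' ν n k))).toReal ≤ (ENNReal.ofReal ((k:ℝ)/n)).toReal :=
        ENNReal.toReal_mono (by simp) hle
    _ = (k:ℝ)/n := ENNReal.toReal_ofReal (by positivity)

/-- Mass of the lower tail below the first gridpoint. -/
lemma mass_lower' (hn : 0 < n) (h1 : 1 ≤ n - 1) :
    (ν (Iio (quant' ν n 1))).toReal ≤ 1/(n:ℝ) := by
  have := quant_cdf_lt (ν := ν) hn (le_refl 1) h1
  simpa using this

/-- Mass of the upper tail above the last gridpoint. -/
lemma mass_upper' (hn : 0 < n) (h1 : 1 ≤ n - 1) :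
    (ν (Ioi (quant' ν n (n-1)))).toReal ≤ 1/(n:ℝ) := by
  have hge := quant_cdf_ge (ν := ν) hn h1 (le_refl (n-1))
  have hcompl : ν (Ioi (quant' ν n (n-1))) = 1 - ν (Iic (quant' ν n (n-1))) := by
    rw [← measure_univ (μ := ν), ← compl_Iic]
    exact measure_compl measurableSet_Iic (measure_ne_top ν _)
  have hle1 : ν (Iic (quant' ν n (n-1))) ≤ 1 := prob_le_one
  rw [hcompl, ENNReal.toReal_sub_of_le hle1 (by simp), ENNReal.toReal_one]
  have hcast : ((n:ℝ) - 1)/n ≤ (ν (Iic (quant' ν n (n-1)))).toReal := by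
    have : ((n-1 : ℕ):ℝ) = (n:ℝ) - 1 := by
      have := Nat.cast_sub (by omega : 1 ≤ n) (R := ℝ)
      simpa using this
    rwa [this] at hge
  have hn' : (0:ℝ) < n := by exact_mod_cast hn
  have : 1 - ((n:ℝ)-1)/n = 1/n := by field_simp; ring
  linarith

/-- Mass of the open gap between consecutive gridpoints. -/
lemma mass_mid' (hn : 0 < n) {k : ℕ} (hk1 : 1 ≤ k) (hk : k + 1 ≤ n - 1) :
    (ν (Ioo (quant' ν n k) (quant' ν n (k+1)))).toReal ≤ 1/(n:ℝ) := by
  set a := quant' ν n k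
  set b := quant' ν n (k+1)
  rcases le_or_gt b a with hba | hab
  · have : Ioo a b = ∅ := Ioo_eq_empty (not_lt.2 hba)
    rw [this]
    simp only [measure_empty, ENNReal.toReal_zero]
    positivity
  · have hsub : Iic a ∪ Ioo a b ⊆ Iio b := by
      intro x hx
      rcases hx with hx | hx
      · exact lt_of_le_of_lt hx hab
      · exact hx.2
    have hdisj : Disjoint (Iic a) (Ioo a b) := by
      apply Set.disjoint_left.2
      intro x hx1 hx2
      exact absurd hx2.1 (not_lt.2 hx1)
    have hunion : ν (Iic a) + ν (Ioo a b) = ν (Iic a ∪ Ioo a b) :=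
      (measure_union hdisj measurableSet_Ioo).symm
    have hle : ν (Iic a) + ν (Ioo a b) ≤ ν (Iio b) := hunion.le.trans (measure_mono hsub)
    have hreal : (ν (Iic a)).toReal + (ν (Ioo a b)).toReal ≤ (ν (Iio b)).toReal := by
      rw [← ENNReal.toReal_add (measure_ne_top ν _) (measure_ne_top ν _)]
      exact ENNReal.toReal_mono (measure_ne_top ν _) hle
    have h1 := quant_cdf_ge (ν := ν) hn hk1 (by omega)
    have h2 := quant_cdf_lt (ν := ν) hn (by omega : 1 ≤ k+1) hk
    have hcast : ((k:ℝ)+1)/n = ((k+1 : ℕ):ℝ)/n := by push_cast; ring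
    have hn' : (0:ℝ) < n := by exact_mod_cast hn
    have : ((k:ℝ)+1)/n - (k:ℝ)/n = 1/n := by field_simp; ring
    rw [hcast] at this
    linarith [h1, h2, hreal]

end Grid



/-- The cylinder over `U`, optionally intersected with the event `y = true`. -/
def cyl (U : Set ℝ) (w : Bool) : Set (ℝ × Bool) := {z | z.1 ∈ U ∧ (w = true → z.2 = true)}

noncomputable def dev (μ1 μ2 : Measure (ℝ × Bool)) (A : Set (ℝ × Bool)) : ℝ :=
  (μ1 A).toReal - (μ2 A).toReal

lemma cyl_mono {U V : Set ℝ} (h : U ⊆ V) (w : Bool) : cyl U w ⊆ cyl V w :=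
  fun z hz => ⟨h hz.1, hz.2⟩

lemma cyl_empty (w : Bool) : cyl ∅ w = ∅ := by
  ext z; simp [cyl]

section Sandwich

variable {μ1 μ2 : Measure (ℝ × Bool)} [IsProbabilityMeasure μ1] [IsProbabilityMeasure μ2]

/-- Deviation on a set sandwiched between two controlled sets. -/
lemma sandwich_core {n : ℕ} {ε₀ : ℝ}
    (U A B : Set ℝ) (w : Bool) (hAU : A ⊆ U) (hUB : U ⊆ B)
    (hdevA : |dev μ1 μ2 (cyl A w)| ≤ ε₀) (hdevB : |dev μ1 μ2 (cyl B w)| ≤ ε₀)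
    (hBU : ((μ1.map Prod.fst) (B \ U)).toReal ≤ 1/(n:ℝ))
    (hUA : ((μ1.map Prod.fst) (U \ A)).toReal ≤ 1/(n:ℝ)) :
    |dev μ1 μ2 (cyl U w)| ≤ ε₀ + 1/(n:ℝ) := by
  have key : ∀ (V W : Set ℝ), V ⊆ W →
      (μ1 (cyl W w)).toReal ≤ (μ1 (cyl V w)).toReal + ((μ1.map Prod.fst) (W \ V)).toReal := by
    intro V W hVW
    have hincl : cyl W w ⊆ cyl V w ∪ Prod.fst ⁻¹' (W \ V) := by
      intro z hz
      by_cases h : z.1 ∈ V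
      · exact Or.inl ⟨h, hz.2⟩
      · exact Or.inr ⟨hz.1, h⟩
    have h1 : μ1 (cyl W w) ≤ μ1 (cyl V w) + (μ1.map Prod.fst) (W \ V) := by
      refine (measure_mono hincl).trans ((measure_union_le _ _).trans ?_)
      gcongr
      exact Measure.le_map_apply measurable_fst.aemeasurable _
    calc (μ1 (cyl W w)).toReal
        ≤ (μ1 (cyl V w) + (μ1.map Prod.fst) (W \ V)).toReal := by
          apply ENNReal.toReal_mono _ h1
          exact ENNReal.add_ne_top.2 ⟨measure_ne_top _ _, measure_ne_top _ _⟩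
      _ = (μ1 (cyl V w)).toReal + ((μ1.map Prod.fst) (W \ V)).toReal :=
          ENNReal.toReal_add (measure_ne_top _ _) (measure_ne_top _ _)
  have hmono2 : ∀ (V W : Set ℝ), V ⊆ W → (μ2 (cyl V w)).toReal ≤ (μ2 (cyl W w)).toReal :=
    fun V W hVW => ENNReal.toReal_mono (measure_ne_top _ _) (measure_mono (cyl_mono hVW w))
  rw [abs_le] at hdevA hdevB ⊢
  unfold dev at *
  constructor
  · -- lower bound : -(ε₀ + 1/n) ≤ μ1 U - μ2 U
    have k1 := key U B hUB
    have k2 := hmono2 U B hUB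
    linarith [hdevB.1]
  · have k1 := key A U hAU
    have k2 := hmono2 A U hAU
    linarith [hdevA.2]

/-- Uniform deviation bound over all upper-set cylinders, given control on the grid. -/
lemma sandwich (n : ℕ) (hn : 2 ≤ n) {ε₀ : ℝ} (hε₀ : 0 ≤ ε₀)
    (hG : ∀ (U : Set ℝ) (w : Bool),
      (U = univ ∨ ∃ k : ℕ, 1 ≤ k ∧ k ≤ n - 1 ∧
        (U = Ioi (quant' (μ1.map Prod.fst) n k) ∨ U = Ici (quant' (μ1.map Prod.fst) n k))) →
      |dev μ1 μ2 (cyl U w)| ≤ ε₀)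
    (U : Set ℝ) (hU : IsUpperSet U) (w : Bool) :
    |dev μ1 μ2 (cyl U w)| ≤ ε₀ + 1/(n:ℝ) := by
  classical
  set ν := μ1.map Prod.fst with hν
  haveI : IsProbabilityMeasure ν := Measure.isProbabilityMeasure_map measurable_fst.aemeasurable
  set q : ℕ → ℝ := quant' ν n with hq
  have hn0 : 0 < n := by omega
  have hn1 : 1 ≤ n - 1 := by omega
  have hdev_empty : |dev μ1 μ2 (cyl ∅ w)| ≤ ε₀ := by
    rw [cyl_empty]
    simp [dev, hε₀]
  -- key fact: if some point ≤ q j is in U then Ici (q j) ⊆ U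
  have hIci : ∀ j : ℕ, ¬ (U ⊆ Ioi (q j)) → Ici (q j) ⊆ U := by
    intro j hj
    rw [not_subset] at hj
    obtain ⟨u, huU, hu⟩ := hj
    simp only [mem_Ioi, not_lt] at hu
    intro x hx
    exact hU (le_trans hu hx) huU
  by_cases h1 : U ⊆ Ioi (q 1)
  · -- find greatest k ≤ n-1 with U ⊆ Ioi (q k)
    set P : ℕ → Prop := fun j => U ⊆ Ioi (q j) with hP
    set k := Nat.findGreatest P (n-1) with hk
    have hPk : P k := Nat.findGreatest_spec (m := 1) hn1 h1
    have hk1 : 1 ≤ k := Nat.le_findGreatest hn1 h1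
    have hkn : k ≤ n - 1 := Nat.findGreatest_le (n-1)
    by_cases hktop : k = n - 1
    · -- tail case
      apply sandwich_core U ∅ (Ioi (q (n-1))) w (empty_subset U) (by rw [← hktop]; exact hPk)
        hdev_empty
        (hG _ w (Or.inr ⟨n-1, hn1, le_refl _, Or.inl rfl⟩))
      · exact le_trans (ENNReal.toReal_mono (measure_ne_top _ _)
          (measure_mono (diff_subset))) (mass_upper' hn0 hn1)
      · rw [diff_empty]
        refine le_trans (ENNReal.toReal_mono (measure_ne_top _ _)
          (measure_mono ?_)) (mass_upper' hn0 hn1)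
        rw [← hktop]; exact hPk
    · -- middle case : k < n-1, hence ¬ P (k+1)
      have hknlt : k < n - 1 := lt_of_le_of_ne hkn hktop
      have hnP : ¬ P (k+1) := Nat.findGreatest_is_greatest (by rw [← hk]; omega) (by omega)
      have hAU : Ici (q (k+1)) ⊆ U := hIci (k+1) hnP
      have hUB : U ⊆ Ioi (q k) := hPk
      apply sandwich_core U (Ici (q (k+1))) (Ioi (q k)) w hAU hUB
        (hG _ w (Or.inr ⟨k+1, by omega, by omega, Or.inr rfl⟩))
        (hG _ w (Or.inr ⟨k, hk1, hkn, Or.inl rfl⟩))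
      · -- ν (Ioi (q k) \ U) ≤ 1/n
        refine le_trans (ENNReal.toReal_mono (measure_ne_top _ _)
          (measure_mono ?_)) (mass_mid' hn0 hk1 (by omega))
        intro x hx
        refine ⟨hx.1, ?_⟩
        by_contra hcon
        push_neg at hcon
        exact hx.2 (hAU hcon)
      · -- ν (U \ Ici (q (k+1))) ≤ 1/n
        refine le_trans (ENNReal.toReal_mono (measure_ne_top _ _)
          (measure_mono ?_)) (mass_mid' hn0 hk1 (by omega))
        intro x hx
        refine ⟨hUB hx.1, ?_⟩
        by_contra hcon
        push_neg at hcon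
        exact hx.2 hcon
  · -- low case: B = univ, A = Ici (q 1)
    have hAU : Ici (q 1) ⊆ U := hIci 1 h1
    apply sandwich_core U (Ici (q 1)) univ w hAU (subset_univ U)
      (hG _ w (Or.inr ⟨1, le_refl 1, hn1, Or.inr rfl⟩))
      (hG _ w (Or.inl rfl))
    · refine le_trans (ENNReal.toReal_mono (measure_ne_top _ _)
        (measure_mono ?_)) (mass_lower' hn0 hn1)
      intro x hx
      by_contra hcon
      simp only [mem_Iio, not_lt] at hcon
      exact hx.2 (hAU hcon)
    · refine le_trans (ENNReal.toReal_mono (measure_ne_top _ _)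
        (measure_mono ?_)) (mass_lower' hn0 hn1)
      intro x hx
      by_contra hcon
      simp only [mem_Iio, not_lt] at hcon
      exact hx.2 hcon

end Sandwich





lemma label_nonneg (b : Bool) : 0 ≤ label b := by cases b <;> simp [label]
lemma label_le_one (b : Bool) : label b ≤ 1 := by cases b <;> simp [label]
lemma measurable_label : Measurable (fun z : ℝ × Bool => label z.2) := by
  have : (fun z : ℝ × Bool => label z.2)
      = Set.indicator {z : ℝ × Bool | z.2 = true} (fun _ => (1:ℝ)) := by
    ext z
    by_cases h : z.2 = true <;> simp [label, h, Set.indicator]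
  rw [this]
  exact Measurable.indicator measurable_const (measurable_snd (measurableSet_singleton true))

section PerFun

variable {μ1 μ2 : Measure (ℝ × Bool)} [IsProbabilityMeasure μ1] [IsProbabilityMeasure μ2]

lemma perfun (n : ℕ) {ε₀ M : ℝ} (hM : 0 < M)
    (hsand : ∀ (U : Set ℝ) (w : Bool), IsUpperSet U → |dev μ1 μ2 (cyl U w)| ≤ ε₀ + 1/(n:ℝ))
    (g : ℝ → ℝ) (hg : Monotone g) (hg0 : ∀ x, 0 ≤ g x) (hgM : ∀ x, g x ≤ M) (w : Bool) :
    |(∫ z, (if w then label z.2 else 1) * g z.1 ∂μ1)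
      - ∫ z, (if w then label z.2 else 1) * g z.1 ∂μ2| ≤ M * (ε₀ + 1/(n:ℝ)) := by
  set h : ℝ × Bool → ℝ := fun z => (if w then label z.2 else 1) * g z.1 with hh
  have hnn : 0 ≤ ε₀ + 1/(n:ℝ) := le_trans (abs_nonneg _) (hsand ∅ w isUpperSet_empty)
  have hmh : Measurable h := by
    apply Measurable.mul
    · cases w
      · simp only [Bool.false_eq_true, if_false]; exact measurable_const
      · simp only [if_true]; exact measurable_label
    · exact (hg.measurable).comp measurable_fst
  have hh0 : ∀ z, 0 ≤ h z := by
    intro z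
    apply mul_nonneg _ (hg0 z.1)
    cases w
    · norm_num
    · simpa using label_nonneg z.2
  have hhM : ∀ z, h z ≤ M := by
    intro z
    calc h z ≤ 1 * g z.1 := by
          apply mul_le_mul_of_nonneg_right _ (hg0 z.1)
          cases w
          · norm_num
          · simpa using label_le_one z.2
    _ = g z.1 := one_mul _
    _ ≤ M := hgM z.1
  have hint1 : Integrable h μ1 := integrable_of_bdd hmh
    (fun z => abs_le.2 ⟨by linarith [hh0 z], hhM z⟩)
  have hint2 : Integrable h μ2 := integrable_of_bdd hmh
    (fun z => abs_le.2 ⟨by linarith [hh0 z], hhM z⟩)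
  have hlc1 := hint1.integral_eq_integral_meas_lt (Eventually.of_forall hh0)
  have hlc2 := hint2.integral_eq_integral_meas_lt (Eventually.of_forall hh0)
  -- superlevel sets are upper-set cylinders
  have hset : ∀ t : ℝ, 0 < t → {a : ℝ × Bool | t < h a} = cyl {x : ℝ | t < g x} w := by
    intro t ht
    ext z
    obtain ⟨x, b⟩ := z
    cases w <;> cases b
    · simp [hh, cyl, label]
    · simp [hh, cyl, label]
    · simp only [hh, cyl, label, mem_setOf_eq, if_true, Bool.false_eq_true, if_false, zero_mul]
      constructor
      · intro hcon; linarith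
      · rintro ⟨-, hcon⟩
        simp at hcon
    · simp [hh, cyl, label]
  set φ1 : ℝ → ℝ := fun t => (μ1 {a : ℝ × Bool | t < h a}).toReal with hφ1
  set φ2 : ℝ → ℝ := fun t => (μ2 {a : ℝ × Bool | t < h a}).toReal with hφ2
  have hanti : ∀ (μ : Measure (ℝ × Bool)), IsFiniteMeasure μ →
      Antitone (fun t => (μ {a : ℝ × Bool | t < h a}).toReal) := by
    intro μ hfin t u htu
    exact ENNReal.toReal_mono (measure_ne_top μ _)
      (measure_mono (fun a ha => lt_of_le_of_lt htu ha))
  have hφ1m : Measurable φ1 := (hanti μ1 inferInstance).measurable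
  have hφ2m : Measurable φ2 := (hanti μ2 inferInstance).measurable
  have hzero : ∀ (μ : Measure (ℝ × Bool)) (t : ℝ), M < t → μ {a : ℝ × Bool | t < h a} = 0 := by
    intro μ t ht
    convert measure_empty (μ := μ)
    ext z
    simp only [mem_setOf_eq, mem_empty_iff_false, iff_false, not_lt]
    linarith [hhM z]
  have hb1 : ∀ (μ : Measure (ℝ × Bool)) [IsProbabilityMeasure μ], ∀ t ∈ Ioi (0:ℝ),
      ‖(μ {a : ℝ × Bool | t < h a}).toReal‖ ≤ (Ioc (0:ℝ) M).indicator (fun _ => (1:ℝ)) t := by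
    intro μ hμ t ht
    rw [Real.norm_eq_abs, abs_of_nonneg ENNReal.toReal_nonneg]
    rcases le_or_gt t M with hc | hc
    · have htm : t ∈ Ioc (0:ℝ) M := mem_Ioc.mpr ⟨mem_Ioi.mp ht, hc⟩
      rw [Set.indicator_of_mem htm]
      exact ENNReal.toReal_le_of_le_ofReal one_pos.le (by simpa using prob_le_one)
    · have htm : t ∉ Ioc (0:ℝ) M := fun hmem => absurd (mem_Ioc.mp hmem).2 (not_le.2 hc)
      rw [hzero μ t hc, Set.indicator_of_notMem htm]
      simp
  have hGind : Integrable ((Ioc (0:ℝ) M).indicator (fun _ => (1:ℝ)))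
      (volume.restrict (Ioi (0:ℝ))) := by
    rw [integrable_indicator_iff measurableSet_Ioc]
    refine integrableOn_const (ne_of_lt ?_)
    calc (volume.restrict (Ioi (0:ℝ))) (Ioc 0 M) ≤ volume (Ioc (0:ℝ) M) :=
          Measure.restrict_le_self _
    _ < ⊤ := by rw [Real.volume_Ioc]; exact ENNReal.ofReal_lt_top
  have hφ1int : Integrable φ1 (volume.restrict (Ioi (0:ℝ))) :=
    hGind.mono' hφ1m.aestronglyMeasurable
      ((ae_restrict_iff' measurableSet_Ioi).2 (Eventually.of_forall (hb1 μ1)))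
  have hφ2int : Integrable φ2 (volume.restrict (Ioi (0:ℝ))) :=
    hGind.mono' hφ2m.aestronglyMeasurable
      ((ae_restrict_iff' measurableSet_Ioi).2 (Eventually.of_forall (hb1 μ2)))
  simp only [measureReal_def] at hlc1 hlc2
  rw [hlc1, hlc2, ← integral_sub hφ1int hφ2int]
  have hbound : ∀ t ∈ Ioi (0:ℝ), ‖φ1 t - φ2 t‖
      ≤ (Ioc (0:ℝ) M).indicator (fun _ => ε₀ + 1/(n:ℝ)) t := by
    intro t ht
    rcases le_or_gt t M with hc | hc
    · have htm : t ∈ Ioc (0:ℝ) M := mem_Ioc.mpr ⟨mem_Ioi.mp ht, hc⟩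
      rw [Set.indicator_of_mem htm]
      rw [Real.norm_eq_abs]
      have := hsand {x : ℝ | t < g x} w
        (fun a b hab ha => lt_of_lt_of_le ha (hg hab))
      rw [← hset t ht] at this
      exact this
    · have htm : t ∉ Ioc (0:ℝ) M := fun hmem => absurd (mem_Ioc.mp hmem).2 (not_le.2 hc)
      rw [Set.indicator_of_notMem htm, hφ1, hφ2]
      simp only [hzero μ1 t hc, hzero μ2 t hc, ENNReal.toReal_zero, sub_self, norm_zero, le_refl]
  calc |∫ t in Ioi (0:ℝ), (φ1 t - φ2 t)|
      ≤ ∫ t in Ioi (0:ℝ), (Ioc (0:ℝ) M).indicator (fun _ => ε₀ + 1/(n:ℝ)) t := by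
        rw [← Real.norm_eq_abs]
        apply norm_integral_le_of_norm_le
        · rw [integrable_indicator_iff measurableSet_Ioc]
          refine integrableOn_const (ne_of_lt ?_)
          calc (volume.restrict (Ioi (0:ℝ))) (Ioc 0 M) ≤ volume (Ioc (0:ℝ) M) :=
                Measure.restrict_le_self _
          _ < ⊤ := by rw [Real.volume_Ioc]; exact ENNReal.ofReal_lt_top
        · exact (ae_restrict_iff' measurableSet_Ioi).2 (Eventually.of_forall hbound)
    _ = (ε₀ + 1/(n:ℝ)) * M := by
        rw [integral_indicator measurableSet_Ioc]
        rw [setIntegral_const]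
        rw [measureReal_def, Measure.restrict_apply measurableSet_Ioc]
        have : Ioc (0:ℝ) M ∩ Ioi 0 = Ioc 0 M := by
          apply inter_eq_self_of_subset_left
          exact fun x hx => hx.1
        rw [this, Real.volume_Ioc, smul_eq_mul, ENNReal.toReal_ofReal (by linarith)]
        ring
    _ = M * (ε₀ + 1/(n:ℝ)) := mul_comm _ _

end PerFun

end Auxiliary

section MainProof

open Real Set Filter Topology
open scoped ENNReal

lemma measurableSet_cyl {U : Set ℝ} (hU : MeasurableSet U) (w : Bool) :
    MeasurableSet (cyl U w) := by
  have : cyl U w = (Prod.fst ⁻¹' U) ∩ (if w then Prod.snd ⁻¹' {true} else univ) := by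
    ext z
    cases w <;> simp [cyl]
  rw [this]
  refine (hU.preimage measurable_fst).inter ?_
  cases w
  · simp
  · simpa using measurable_snd (measurableSet_singleton true)

set_option maxHeartbeats 1000000 in
/-- Uniform convergence of the residual-correlation functional simultaneously over all
pairs of bounded non-decreasing functions `(p, ξ)`. -/
theorem monotone_pair_uniform_convergence :
    ∃ C : ℝ, 0 < C ∧
      ∀ (D : Measure (ℝ × Bool)) [IsProbabilityMeasure D],
        ∀ δ : ℝ, δ ∈ Set.Ioo (0:ℝ) (1/3) →
        ∀ n : ℕ, 2 ≤ n →
        1 - ENNReal.ofReal δ ≤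
          (Measure.pi fun _ : Fin n => D) {s |
            ∀ ξ p : ℝ → ℝ,
              Monotone ξ → (∀ t : ℝ, ξ t ∈ Set.Icc (-1:ℝ) 1) →
              Monotone p → (∀ t : ℝ, p t ∈ Set.Icc (0:ℝ) 1) →
              |(∫ z, (p z.1 - label z.2) * ξ z.1 ∂D)
                - (1 / (n : ℝ)) * ∑ i : Fin n, (p (s i).1 - label (s i).2) * ξ (s i).1|
                ≤ C * Real.sqrt ((Real.log n + Real.log (1 / δ)) / n)} := by
  classical
  refine ⟨100, by norm_num, ?_⟩
  intro D _ δ hδ n hn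
  obtain ⟨hδ0, hδ3⟩ := hδ
  have hn0 : (n:ℕ) ≠ 0 := by omega
  have hnpos : (0:ℝ) < n := by exact_mod_cast (by omega : 0 < n)
  set ν : Measure ℝ := D.map Prod.fst with hν
  set q : ℕ → ℝ := quant' ν n with hq
  set ε₀ : ℝ := Real.sqrt (2 * Real.log (8*n/δ) / n) with hε₀def
  have hn2 : (2:ℝ) ≤ n := by exact_mod_cast hn
  have h8n : (1:ℝ) ≤ 8*n/δ := by
    rw [le_div_iff₀ hδ0]
    nlinarith
  have hlog8n : 0 ≤ Real.log (8*n/δ) := Real.log_nonneg h8n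
  have hε₀nn : 0 ≤ ε₀ := Real.sqrt_nonneg _
  set P := (Measure.pi fun _ : Fin n => D) with hP
  -- the grid family
  set Uof : Fin n → Bool → Set ℝ := fun k io =>
    if k.val = 0 then univ else if io then Ioi (q k.val) else Ici (q k.val) with hUof
  set Aset : Fin n × Bool × Bool → Set (ℝ × Bool) := fun j => cyl (Uof j.1 j.2.1) j.2.2
    with hAset
  have hUmeas : ∀ (k : Fin n) (io : Bool), MeasurableSet (Uof k io) := by
    intro k io
    rw [hUof]
    by_cases h : k.val = 0
    · simp [h]
    · rcases io with _ | _ <;> simp [h]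
  have hAmeas : ∀ j, MeasurableSet (Aset j) := fun j => measurableSet_cyl (hUmeas _ _) _
  -- the good event
  set E : Set (Fin n → ℝ × Bool) :=
    {s | ∀ j : Fin n × Bool × Bool, |dev D (emp n s) (Aset j)| ≤ ε₀} with hE
  -- empirical measure formula as a function of s
  have hempfun : ∀ j, (fun s : Fin n → ℝ × Bool => ((emp n s) (Aset j)).toReal)
      = fun s => (1/(n:ℝ)) * ∑ i : Fin n, (Aset j).indicator (fun _ => (1:ℝ)) (s i) :=
    fun j => funext (fun s => emp_apply n hn0 s (hAmeas j))
  have hdevmeas : ∀ j, Measurable (fun s : Fin n → ℝ × Bool => ((emp n s) (Aset j)).toReal) := by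
    intro j
    rw [hempfun j]
    apply Measurable.const_mul
    exact Finset.measurable_sum _ (fun i _ =>
      (Measurable.indicator measurable_const (hAmeas j)).comp (measurable_pi_apply i))
  have hEmeas : MeasurableSet E := by
    rw [hE]
    have : {s : Fin n → ℝ × Bool | ∀ j : Fin n × Bool × Bool, |dev D (emp n s) (Aset j)| ≤ ε₀}
        = ⋂ j : Fin n × Bool × Bool,
          {s | |(D (Aset j)).toReal - ((emp n s) (Aset j)).toReal| ≤ ε₀} := by
      ext s
      simp only [mem_iInter, mem_setOf_eq, dev]
    rw [this]
    refine MeasurableSet.iInter (fun j => ?_)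
    exact measurableSet_le ((measurable_const.sub (hdevmeas j)).abs) measurable_const
  -- probability of the bad event
  have hchern : P Eᶜ ≤ ENNReal.ofReal δ := by
    have hsubset : Eᶜ ⊆ ⋃ j : Fin n × Bool × Bool,
        {s : Fin n → ℝ × Bool | ε₀ ≤ |(1/(n:ℝ)) * (∑ i : Fin n,
          ((Aset j).indicator (fun _ => (1:ℝ))) (s i))
            - ∫ w, ((Aset j).indicator (fun _ => (1:ℝ))) w ∂D|} := by
      intro s hs
      rw [hE, mem_compl_iff, mem_setOf_eq] at hs
      push_neg at hs
      obtain ⟨j, hj⟩ := hs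
      refine mem_iUnion.2 ⟨j, ?_⟩
      rw [mem_setOf_eq]
      have hDj : ∫ w, ((Aset j).indicator (fun _ => (1:ℝ))) w ∂D = (D (Aset j)).toReal := by
        rw [integral_indicator_const (1:ℝ) (hAmeas j)]
        simp [measureReal_def]
      have hEj : (1/(n:ℝ)) * (∑ i : Fin n, ((Aset j).indicator (fun _ => (1:ℝ))) (s i))
          = ((emp n s) (Aset j)).toReal := (emp_apply n hn0 s (hAmeas j)).symm
      rw [hDj, hEj]
      rw [abs_sub_comm]
      exact le_of_lt (by simpa [dev] using hj)
    calc P Eᶜ ≤ P (⋃ j : Fin n × Bool × Bool,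
        {s : Fin n → ℝ × Bool | ε₀ ≤ |(1/(n:ℝ)) * (∑ i : Fin n,
          ((Aset j).indicator (fun _ => (1:ℝ))) (s i))
            - ∫ w, ((Aset j).indicator (fun _ => (1:ℝ))) w ∂D|}) := measure_mono hsubset
      _ ≤ ∑ j : Fin n × Bool × Bool, P {s : Fin n → ℝ × Bool | ε₀ ≤ |(1/(n:ℝ)) * (∑ i : Fin n,
          ((Aset j).indicator (fun _ => (1:ℝ))) (s i))
            - ∫ w, ((Aset j).indicator (fun _ => (1:ℝ))) w ∂D|} := by
          exact measure_iUnion_fintype_le P _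
      _ ≤ ∑ _j : Fin n × Bool × Bool, ENNReal.ofReal (2 * Real.exp (-(n:ℝ) * ε₀^2 / 2)) := by
          apply Finset.sum_le_sum
          intro j _
          exact chernoff_two_sided D n
            (Measurable.indicator measurable_const (hAmeas j))
            (fun z => Set.indicator_nonneg (fun _ _ => zero_le_one) z)
            (fun z => Set.indicator_le' (fun _ _ => le_refl 1) (fun _ _ => zero_le_one) z)
            hε₀nn
      _ = ENNReal.ofReal δ := by
          rw [Finset.sum_const, Finset.card_univ]
          have hcard : Fintype.card (Fin n × Bool × Bool) = 4*n := by
            simp [Fintype.card_prod]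
            ring
          rw [hcard, nsmul_eq_mul]
          have hsq : ε₀^2 = 2 * Real.log (8*n/δ) / n := Real.sq_sqrt (by positivity)
          have hexp : -(n:ℝ) * ε₀^2 / 2 = - Real.log (8*n/δ) := by
            rw [hsq]
            field_simp
          rw [hexp, Real.exp_neg, Real.exp_log (by positivity)]
          rw [← ENNReal.ofReal_natCast (4*n), ← ENNReal.ofReal_mul (by positivity)]
          congr 1
          push_cast
          field_simp
          ring
  -- lower bound for the good event
  have hPE : 1 - ENNReal.ofReal δ ≤ P E := by
    have hadd : P E + P Eᶜ = 1 := by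
      rw [measure_add_measure_compl hEmeas, measure_univ]
    have hPEeq : P E = 1 - P Eᶜ := ENNReal.eq_sub_of_add_eq (measure_ne_top P Eᶜ) hadd
    rw [hPEeq]
    exact tsub_le_tsub_left hchern 1
  refine le_trans hPE (measure_mono ?_)
  -- main inclusion : E is contained in the target event
  intro s hs
  rw [hE, mem_setOf_eq] at hs
  rw [mem_setOf_eq]
  intro ξ p hξ hξb hp hpb
  haveI hempP : IsProbabilityMeasure (emp n s) := emp_isProb n hn0 s
  have hp0 : ∀ x, 0 ≤ p x := fun x => (hpb x).1
  have hp1 : ∀ x, p x ≤ 1 := fun x => (hpb x).2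
  have hξl : ∀ x, -1 ≤ ξ x := fun x => (hξb x).1
  have hξu : ∀ x, ξ x ≤ 1 := fun x => (hξb x).2
  -- grid control
  have hG : ∀ (U : Set ℝ) (w : Bool),
      (U = univ ∨ ∃ k : ℕ, 1 ≤ k ∧ k ≤ n - 1 ∧
        (U = Ioi (quant' (D.map Prod.fst) n k) ∨ U = Ici (quant' (D.map Prod.fst) n k))) →
      |dev D (emp n s) (cyl U w)| ≤ ε₀ := by
    intro U w hU
    rcases hU with rfl | ⟨k, hk1, hkn, hU⟩
    · have := hs (⟨0, by omega⟩, true, w)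
      have hU0 : Uof ⟨0, by omega⟩ true = univ := by simp [hUof]
      rw [hAset] at this
      simp only [hU0] at this
      exact this
    · have hkltn : k < n := by omega
      rcases hU with rfl | rfl
      · have := hs (⟨k, hkltn⟩, true, w)
        have hU0 : Uof ⟨k, hkltn⟩ true = Ioi (q k) := by
          simp [hUof, show k ≠ 0 by omega]
        rw [hAset] at this
        simp only [hU0] at this
        exact this
      · have := hs (⟨k, hkltn⟩, false, w)
        have hU0 : Uof ⟨k, hkltn⟩ false = Ici (q k) := by
          simp [hUof, show k ≠ 0 by omega]
        rw [hAset] at this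
        simp only [hU0] at this
        exact this
  have hsand : ∀ (U : Set ℝ) (w : Bool), IsUpperSet U →
      |dev D (emp n s) (cyl U w)| ≤ ε₀ + 1/(n:ℝ) :=
    fun U w hU => sandwich n hn hε₀nn hG U hU w
  -- the four monotone pieces
  set g1 : ℝ → ℝ := fun x => p x * (1 + ξ x) with hg1
  have hg1mono : Monotone g1 := by
    intro a b hab
    apply mul_le_mul (hp hab) (by linarith [hξ hab]) (by linarith [hξl a]) (hp0 b)
  have hg1nn : ∀ x, 0 ≤ g1 x := fun x => mul_nonneg (hp0 x) (by linarith [hξl x])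
  have hg1le : ∀ x, g1 x ≤ 2 := by
    intro x
    calc g1 x ≤ 1 * (1 + ξ x) := mul_le_mul_of_nonneg_right (hp1 x) (by linarith [hξl x])
    _ = 1 + ξ x := one_mul _
    _ ≤ 2 := by linarith [hξu x]
  set g3 : ℝ → ℝ := fun x => 1 + ξ x with hg3
  have hg3mono : Monotone g3 := fun a b hab => by simp only [hg3]; linarith [hξ hab]
  have hg3nn : ∀ x, 0 ≤ g3 x := fun x => by simp only [hg3]; linarith [hξl x]
  have hg3le : ∀ x, g3 x ≤ 2 := fun x => by simp only [hg3]; linarith [hξu x]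
  -- deviation bounds for the four pieces
  have bp1 := perfun (μ1 := D) (μ2 := emp n s) n (by norm_num : (0:ℝ) < 2) hsand
    g1 hg1mono hg1nn hg1le false
  have be1 : |(∫ z : ℝ × Bool, g1 z.1 ∂D) - ∫ z : ℝ × Bool, g1 z.1 ∂(emp n s)|
      ≤ 2 * (ε₀ + 1/(n:ℝ)) := by simpa using bp1
  have bp2 := perfun (μ1 := D) (μ2 := emp n s) n (by norm_num : (0:ℝ) < 1) hsand
    p hp hp0 hp1 false
  have be2 : |(∫ z : ℝ × Bool, p z.1 ∂D) - ∫ z : ℝ × Bool, p z.1 ∂(emp n s)|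
      ≤ 1 * (ε₀ + 1/(n:ℝ)) := by simpa using bp2
  have bp3 := perfun (μ1 := D) (μ2 := emp n s) n (by norm_num : (0:ℝ) < 2) hsand
    g3 hg3mono hg3nn hg3le true
  have be3 : |(∫ z : ℝ × Bool, label z.2 * g3 z.1 ∂D)
      - ∫ z : ℝ × Bool, label z.2 * g3 z.1 ∂(emp n s)| ≤ 2 * (ε₀ + 1/(n:ℝ)) := by
    simpa using bp3
  have bp4 := perfun (μ1 := D) (μ2 := emp n s) n (by norm_num : (0:ℝ) < 1) hsand
    (fun _ => (1:ℝ)) monotone_const (fun _ => zero_le_one) (fun _ => le_refl 1) true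
  have be4 : |(∫ z : ℝ × Bool, label z.2 ∂D) - ∫ z : ℝ × Bool, label z.2 ∂(emp n s)|
      ≤ 1 * (ε₀ + 1/(n:ℝ)) := by simpa using bp4
  -- measurability and integrability of the pieces
  have hpm : Measurable p := hp.measurable
  have hξm : Measurable ξ := hξ.measurable
  have hfm : Measurable (fun z : ℝ × Bool => (p z.1 - label z.2) * ξ z.1) :=
    ((hpm.comp measurable_fst).sub measurable_label).mul (hξm.comp measurable_fst)
  have hfb : ∀ z : ℝ × Bool, |(p z.1 - label z.2) * ξ z.1| ≤ 1 := by
    intro z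
    rw [abs_mul]
    have h1 : |p z.1 - label z.2| ≤ 1 := abs_le.2
      ⟨by linarith [hp0 z.1, label_le_one z.2], by linarith [hp1 z.1, label_nonneg z.2]⟩
    have h2 : |ξ z.1| ≤ 1 := abs_le.2 ⟨hξl z.1, hξu z.1⟩
    calc |p z.1 - label z.2| * |ξ z.1| ≤ 1 * 1 :=
      mul_le_mul h1 h2 (abs_nonneg _) zero_le_one
    _ = 1 := one_mul 1
  -- decomposition of the integral
  have hd : ∀ (μ : Measure (ℝ × Bool)), IsProbabilityMeasure μ →
      ∫ z, (p z.1 - label z.2) * ξ z.1 ∂μ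
        = ((∫ z : ℝ × Bool, g1 z.1 ∂μ) - (∫ z : ℝ × Bool, p z.1 ∂μ))
          - ((∫ z : ℝ × Bool, label z.2 * g3 z.1 ∂μ) - (∫ z : ℝ × Bool, label z.2 ∂μ)) := by
    intro μ hμ
    have hi1 : Integrable (fun z : ℝ × Bool => g1 z.1) μ :=
      integrable_of_bdd ((hpm.mul (measurable_const.add hξm)).comp measurable_fst)
        (C := 2) (fun z => abs_le.2 ⟨by linarith [hg1nn z.1], hg1le z.1⟩)
    have hi2 : Integrable (fun z : ℝ × Bool => p z.1) μ :=
      integrable_of_bdd (hpm.comp measurable_fst)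
        (C := 1) (fun z => abs_le.2 ⟨by linarith [hp0 z.1], hp1 z.1⟩)
    have hb3 : ∀ z : ℝ × Bool, |label z.2 * g3 z.1| ≤ 2 := by
      intro z
      rw [abs_mul, abs_of_nonneg (label_nonneg z.2), abs_of_nonneg (hg3nn z.1)]
      calc label z.2 * g3 z.1 ≤ 1 * 2 :=
            mul_le_mul (label_le_one z.2) (hg3le z.1) (hg3nn z.1) zero_le_one
      _ = 2 := by norm_num
    have hi3 : Integrable (fun z : ℝ × Bool => label z.2 * g3 z.1) μ :=
      integrable_of_bdd (measurable_label.mul ((measurable_const.add hξm).comp measurable_fst))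
        (C := 2) hb3
    have hi4 : Integrable (fun z : ℝ × Bool => label z.2) μ :=
      integrable_of_bdd measurable_label
        (C := 1) (fun z => abs_le.2 ⟨by linarith [label_nonneg z.2], label_le_one z.2⟩)
    have hi12 : Integrable (fun z : ℝ × Bool => g1 z.1 - p z.1) μ := hi1.sub hi2
    have hi34 : Integrable (fun z : ℝ × Bool => label z.2 * g3 z.1 - label z.2) μ := hi3.sub hi4
    calc ∫ z, (p z.1 - label z.2) * ξ z.1 ∂μ
        = ∫ z, ((g1 z.1 - p z.1) - (label z.2 * g3 z.1 - label z.2)) ∂μ := by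
          apply integral_congr_ae
          filter_upwards with z
          simp only [hg1, hg3]
          ring
      _ = (∫ z, (g1 z.1 - p z.1) ∂μ) - ∫ z, (label z.2 * g3 z.1 - label z.2) ∂μ :=
          integral_sub hi12 hi34
      _ = _ := by rw [integral_sub hi1 hi2, integral_sub hi3 hi4]
  -- the empirical sum is the empirical integral
  have hempsum : (1/(n:ℝ)) * ∑ i : Fin n, (p (s i).1 - label (s i).2) * ξ (s i).1
      = ∫ z, (p z.1 - label z.2) * ξ z.1 ∂(emp n s) :=
    (emp_integral n hn0 s _ hfm hfb).symm
  rw [hempsum, hd D inferInstance, hd (emp n s) hempP]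
  -- combine the four bounds
  have habs : |(((∫ z : ℝ × Bool, g1 z.1 ∂D) - (∫ z : ℝ × Bool, p z.1 ∂D))
      - ((∫ z : ℝ × Bool, label z.2 * g3 z.1 ∂D) - (∫ z : ℝ × Bool, label z.2 ∂D)))
      - (((∫ z : ℝ × Bool, g1 z.1 ∂(emp n s)) - (∫ z : ℝ × Bool, p z.1 ∂(emp n s)))
      - ((∫ z : ℝ × Bool, label z.2 * g3 z.1 ∂(emp n s))
        - (∫ z : ℝ × Bool, label z.2 ∂(emp n s))))| ≤ 6 * (ε₀ + 1/(n:ℝ)) := by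
    rw [abs_le] at be1 be2 be3 be4 ⊢
    constructor <;> [skip; skip] <;>
      · obtain ⟨a1, a2⟩ := be1
        obtain ⟨b1, b2⟩ := be2
        obtain ⟨c1, c2⟩ := be3
        obtain ⟨d1, d2⟩ := be4
        linarith
  refine habs.trans ?_
  -- final numeric comparison
  have hlogn : 0 ≤ Real.log n := Real.log_nonneg (by exact_mod_cast (by omega : 1 ≤ n))
  have hinvδ : (3:ℝ) ≤ 1/δ := by
    rw [le_div_iff₀ hδ0]
    linarith
  have hlogδ : 1 ≤ Real.log (1/δ) := by
    rw [Real.le_log_iff_exp_le (by positivity)]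
    calc Real.exp 1 ≤ 2.7182818286 := (Real.exp_one_lt_d9).le
    _ ≤ 3 := by norm_num
    _ ≤ 1/δ := hinvδ
  set L : ℝ := Real.log n + Real.log (1/δ) with hL
  have hL1 : 1 ≤ L := by rw [hL]; linarith
  have hlogbound : Real.log (8*n/δ) ≤ 4 * L := by
    have he1 : Real.log (8*n/δ) = Real.log (8*n) + Real.log (1/δ) := by
      rw [div_eq_mul_inv, Real.log_mul (by positivity) (by positivity), ← one_div]
    have he2 : Real.log (8*(n:ℝ)) = Real.log 8 + Real.log n :=
      Real.log_mul (by norm_num) (by positivity)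
    have he3 : Real.log (8:ℝ) ≤ 3 * Real.log n := by
      have h8 : (8:ℝ) = 2^3 := by norm_num
      rw [h8, Real.log_pow]
      have : Real.log 2 ≤ Real.log n := Real.log_le_log (by norm_num) hn2
      push_cast
      linarith
    rw [he1, he2, hL]
    linarith
  have hquot : 2 * Real.log (8*n/δ) / n ≤ 9 * (L/n) := by
    rw [div_le_iff₀ hnpos]
    have h9 : 9 * (L/(n:ℝ)) * n = 9 * L := by field_simp
    rw [h9]
    linarith
  have hsqrt9 : Real.sqrt 9 = 3 := by
    rw [show (9:ℝ) = 3^2 by norm_num, Real.sqrt_sq (by norm_num)]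
  have hε₀le : ε₀ ≤ 3 * Real.sqrt (L/n) := by
    rw [hε₀def]
    calc Real.sqrt (2 * Real.log (8*n/δ) / n) ≤ Real.sqrt (9 * (L/n)) :=
          Real.sqrt_le_sqrt hquot
    _ = Real.sqrt 9 * Real.sqrt (L/n) := Real.sqrt_mul (by norm_num) _
    _ = 3 * Real.sqrt (L/n) := by rw [hsqrt9]
  have hinvn : 1/(n:ℝ) ≤ Real.sqrt (L/n) := by
    have h1 : (1/(n:ℝ))^2 ≤ L/n := by
      rw [div_pow, one_pow]
      calc 1/(n:ℝ)^2 ≤ 1/((n:ℝ)*1) := by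
            apply one_div_le_one_div_of_le (by positivity)
            nlinarith
      _ = 1/(n:ℝ) := by rw [mul_one]
      _ ≤ L/(n:ℝ) := by gcongr
    calc 1/(n:ℝ) = Real.sqrt ((1/(n:ℝ))^2) := (Real.sqrt_sq (by positivity)).symm
    _ ≤ Real.sqrt (L/n) := Real.sqrt_le_sqrt h1
  have hBnn : 0 ≤ Real.sqrt (L/n) := Real.sqrt_nonneg _
  calc (6:ℝ) * (ε₀ + 1/(n:ℝ)) ≤ 6 * (3 * Real.sqrt (L/n) + Real.sqrt (L/n)) := by
        apply mul_le_mul_of_nonneg_left _ (by norm_num)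
        linarith
    _ = 24 * Real.sqrt (L/n) := by ring
    _ ≤ 100 * Real.sqrt (L/n) := by linarith
    _ = 100 * Real.sqrt ((Real.log n + Real.log (1/δ))/n) := by rw [hL]


end MainProof
end

section
/- Let n ≥ 1 and let D be a probability distribution on [n] × {0,1}, where [n] = {1, …, n} with its natural order. Let p : [n] → [0,1] minimize E_{(x,y)∼D}[(q(x) − y)²] over all non-decreasing q : [n] → [0,1] (this is the Pool-Adjacent-Violators / isotonic regression solution). Then: (i) p is perfectly calibrated, i.e., for every v in the range of p with P_{(x,y)∼D}(p(x) = v) > 0, E_{(x,y)∼D}[y | p(x) = v] = v; and (ii) for every non-decreasing function ξ : [n] → ℝ, E_{(x,y)∼D}[(p(x) − y)·ξ(x)] ≥ 0. -/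
open MeasureTheory Finset
open scoped Classical

set_option linter.unusedSectionVars false

section Helpers
variable {n : ℕ} {D : Measure (Fin n × Bool)} [IsProbabilityMeasure D]
lemma meas_all (S : Set (Fin n × Bool)) : MeasurableSet S :=
  S.to_countable.measurableSet

lemma int_eq (f : Fin n × Bool → ℝ) :
    ∫ z, f z ∂D = ∑ z, (D {z}).toReal * f z := by
  rw [integral_fintype Integrable.of_finite]
  rfl

lemma setint_eq (S : Set (Fin n × Bool)) (f : Fin n × Bool → ℝ) :
    ∫ z in S, f z ∂D = ∑ z, (if z ∈ S then (D {z}).toReal * f z else 0) := by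
  rw [← integral_indicator (meas_all S), int_eq]
  congr 1; ext z; by_cases h : z ∈ S <;> simp [Set.indicator, h]

/-- The residual mass at point `i`. -/
noncomputable def res (D : Measure (Fin n × Bool)) (p : Fin n → ℝ) (i : Fin n) : ℝ :=
  (D {(i,true)}).toReal * (p i - 1) + (D {(i,false)}).toReal * (p i)

lemma sum_res_eq (p χ : Fin n → ℝ) :
    ∑ z : Fin n × Bool, (D {z}).toReal * ((p z.1 - label z.2) * χ z.1)
      = ∑ i, χ i * res D p i := by
  rw [Fintype.sum_prod_type]
  refine Finset.sum_congr rfl fun i _ => ?_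
  rw [Fintype.sum_bool]
  simp only [label, res]
  norm_num
  ring

lemma first_order (p : Fin n → ℝ)
    (hp_min : ∀ q : Fin n → ℝ, Monotone q → (∀ i, q i ∈ Set.Icc (0:ℝ) 1) →
      (∫ z, (p z.1 - label z.2)^2 ∂D) ≤ ∫ z, (q z.1 - label z.2)^2 ∂D)
    (χ : Fin n → ℝ) (ε : ℝ) (hε : 0 < ε)
    (hfeas : ∀ t : ℝ, 0 < t → t ≤ ε →
      Monotone (fun i => p i + t * χ i) ∧ ∀ i, p i + t * χ i ∈ Set.Icc (0:ℝ) 1) :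
    0 ≤ ∑ i, χ i * res D p i := by
  set A := ∑ i, χ i * res D p i with hA
  set B := ∑ z : Fin n × Bool, (D {z}).toReal * (χ z.1)^2 with hB
  have hBnn : 0 ≤ B := Finset.sum_nonneg fun z _ =>
    mul_nonneg ENNReal.toReal_nonneg (sq_nonneg _)
  have key : ∀ t : ℝ, 0 < t → t ≤ ε → 0 ≤ 2 * A + t * B := by
    intro t ht htε
    obtain ⟨hmono, hicc⟩ := hfeas t ht htε
    have h1 := hp_min _ hmono hicc
    rw [int_eq, int_eq] at h1
    have expand : ∑ z : Fin n × Bool, (D {z}).toReal * (p z.1 + t * χ z.1 - label z.2)^2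
        = ∑ z : Fin n × Bool, (D {z}).toReal * (p z.1 - label z.2)^2
          + t * (2 * A) + t^2 * B := by
      rw [hA, ← sum_res_eq (D := D) p χ, hB, Finset.mul_sum, Finset.mul_sum,
        Finset.mul_sum, ← Finset.sum_add_distrib, ← Finset.sum_add_distrib]
      refine Finset.sum_congr rfl fun z _ => ?_
      ring
    rw [expand] at h1
    have h2 : 0 ≤ t * (2 * A + t * B) := by nlinarith
    have := (mul_nonneg_iff_of_pos_left ht).mp h2
    linarith
  by_contra hAneg
  push_neg at hAneg
  set t := min ε ((-A)/(B+1)) with htdef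
  have ht : 0 < t := lt_min hε (div_pos (by linarith) (by linarith))
  have h2A := key t ht (min_le_left _ _)
  have h3 : t * (B+1) ≤ -A := by
    rw [← le_div_iff₀ (by linarith : (0:ℝ) < B + 1)]
    exact min_le_right _ _
  nlinarith
variable (p : Fin n → ℝ) (hp_mono : Monotone p) (hp_range : ∀ i, p i ∈ Set.Icc (0:ℝ) 1)
    (hp_min : ∀ q : Fin n → ℝ, Monotone q → (∀ i, q i ∈ Set.Icc (0:ℝ) 1) →
      (∫ z, (p z.1 - label z.2)^2 ∂D) ≤ ∫ z, (q z.1 - label z.2)^2 ∂D)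

include hp_mono hp_range hp_min in
lemma level_up (v : ℝ) (hv0 : 0 ≤ v) (hv1 : v < 1) :
    0 ≤ ∑ i ∈ univ.filter (fun i => p i = v), res D p i := by
  set G := insert (1-v) ((univ.filter (fun j => v < p j)).image (fun j => p j - v)) with hG
  have hGne : G.Nonempty := ⟨1-v, mem_insert_self _ _⟩
  set ε := G.min' hGne with hε
  have hεpos : 0 < ε := by
    rw [hε, Finset.lt_min'_iff]
    intro x hx
    rw [hG, Finset.mem_insert] at hx
    rcases hx with rfl | hx
    · linarith
    · obtain ⟨j, hj, rfl⟩ := Finset.mem_image.mp hx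
      have := (Finset.mem_filter.mp hj).2
      linarith
  have hε1 : ε ≤ 1 - v := Finset.min'_le _ _ (Finset.mem_insert_self _ _)
  have hgap : ∀ j, v < p j → ε ≤ p j - v := by
    intro j h
    apply Finset.min'_le
    exact Finset.mem_insert_of_mem (Finset.mem_image.mpr ⟨j, by simp [h], rfl⟩)
  have h := first_order p hp_min (fun i => if p i = v then 1 else 0) ε hεpos ?_
  · simpa [Finset.sum_filter, ite_mul] using h
  · intro t ht htε
    constructor
    · intro i j hij
      simp only
      by_cases hi : p i = v <;> by_cases hj : p j = v <;> simp [hi, hj]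
      · have h1 : v < p j := lt_of_le_of_ne (hi ▸ hp_mono hij) (Ne.symm hj)
        have := hgap j h1; linarith
      · have h1 : p i ≤ v := hj ▸ hp_mono hij
        linarith
      · exact hp_mono hij
    · intro i
      by_cases hi : p i = v <;> simp [hi, Set.mem_Icc]
      · constructor <;> linarith
      · exact hp_range i

include hp_mono hp_range hp_min in
lemma level_down (v : ℝ) (hv0 : 0 < v) (hv1 : v ≤ 1) :
    ∑ i ∈ univ.filter (fun i => p i = v), res D p i ≤ 0 := by
  set G := insert v ((univ.filter (fun j => p j < v)).image (fun j => v - p j)) with hG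
  have hGne : G.Nonempty := ⟨v, mem_insert_self _ _⟩
  set ε := G.min' hGne with hε
  have hεpos : 0 < ε := by
    rw [hε, Finset.lt_min'_iff]
    intro x hx
    rw [hG, Finset.mem_insert] at hx
    rcases hx with rfl | hx
    · linarith
    · obtain ⟨j, hj, rfl⟩ := Finset.mem_image.mp hx
      have := (Finset.mem_filter.mp hj).2
      linarith
  have hε1 : ε ≤ v := Finset.min'_le _ _ (Finset.mem_insert_self _ _)
  have hgap : ∀ j, p j < v → ε ≤ v - p j := by
    intro j h
    apply Finset.min'_le
    exact Finset.mem_insert_of_mem (Finset.mem_image.mpr ⟨j, by simp [h], rfl⟩)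
  have h := first_order p hp_min (fun i => if p i = v then -1 else 0) ε hεpos ?_
  · rw [Finset.sum_filter]
    have h2 : (0:ℝ) ≤ ∑ x : Fin n, (if p x = v then -res D p x else 0) := by
      simpa [ite_mul] using h
    have h3 : ∑ x : Fin n, (if p x = v then -res D p x else 0)
        = -∑ a : Fin n, (if p a = v then res D p a else 0) := by
      rw [← Finset.sum_neg_distrib]
      exact Finset.sum_congr rfl fun x _ => by by_cases hx : p x = v <;> simp [hx]
    rw [h3] at h2; linarith
  · intro t ht htε
    constructor
    · intro i j hij
      simp only
      by_cases hi : p i = v <;> by_cases hj : p j = v <;> simp [hi, hj]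
      · have h1 : v ≤ p j := hi ▸ hp_mono hij
        linarith
      · have h1 : p i < v := lt_of_le_of_ne (hj ▸ hp_mono hij) hi
        have := hgap i h1; linarith
      · exact hp_mono hij
    · intro i
      by_cases hi : p i = v <;> simp [hi, Set.mem_Icc]
      · constructor <;> linarith
      · exact hp_range i

include hp_mono hp_range hp_min in
lemma tail_up (k : Fin n) :
    0 ≤ ∑ i ∈ univ.filter (fun i => k ≤ i ∧ p i < 1), res D p i := by
  set G := insert 1 ((univ.filter (fun j => p j < 1)).image (fun j => 1 - p j)) with hG
  have hGne : G.Nonempty := ⟨1, mem_insert_self _ _⟩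
  set ε := G.min' hGne with hε
  have hεpos : 0 < ε := by
    rw [hε, Finset.lt_min'_iff]
    intro x hx
    rw [hG, Finset.mem_insert] at hx
    rcases hx with rfl | hx
    · linarith
    · obtain ⟨j, hj, rfl⟩ := Finset.mem_image.mp hx
      have := (Finset.mem_filter.mp hj).2
      linarith
  have hgap : ∀ j, p j < 1 → ε ≤ 1 - p j := by
    intro j h
    apply Finset.min'_le
    exact Finset.mem_insert_of_mem (Finset.mem_image.mpr ⟨j, by simp [h], rfl⟩)
  have h := first_order p hp_min (fun i => if k ≤ i ∧ p i < 1 then 1 else 0) ε hεpos ?_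
  · simpa [Finset.sum_filter, ite_mul] using h
  · intro t ht htε
    constructor
    · intro i j hij
      simp only
      by_cases hi : k ≤ i ∧ p i < 1 <;> by_cases hj : k ≤ j ∧ p j < 1 <;> simp [hi, hj]
      · linarith [hp_mono hij]
      · -- hi true, hj false
        have hkj : k ≤ j := le_trans hi.1 hij
        have hpj : p j = 1 := by
          have := (hp_range j).2
          by_contra hne
          exact hj ⟨hkj, lt_of_le_of_ne this hne⟩
        have := hgap i hi.2
        rw [hpj]; linarith
      · linarith [hp_mono hij]
      · exact hp_mono hij
    · intro i
      by_cases hi : k ≤ i ∧ p i < 1 <;> simp [hi, Set.mem_Icc]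
      · have := hgap i hi.2
        have := (hp_range i).1
        constructor <;> linarith
      · exact hp_range i
lemma res_of_one {i : Fin n} (hi : p i = 1) : 0 ≤ res D p i := by
  simp [res, hi]

lemma res_of_zero {i : Fin n} (hi : p i = 0) : res D p i ≤ 0 := by
  simp only [res, hi, mul_zero, add_zero]
  nlinarith [ENNReal.toReal_nonneg (a := D {(i, true)})]

include hp_mono hp_range hp_min in
lemma level_zero (v : ℝ) (hv : v ∈ Set.range p) :
    ∑ i ∈ univ.filter (fun i => p i = v), res D p i = 0 := by
  obtain ⟨i0, rfl⟩ := hv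
  obtain ⟨h0, h1⟩ := hp_range i0
  have hge : 0 ≤ ∑ i ∈ univ.filter (fun i => p i = p i0), res D p i := by
    rcases lt_or_eq_of_le h1 with h | h
    · exact level_up p hp_mono hp_range hp_min _ h0 h
    · refine Finset.sum_nonneg fun i hi => ?_
      have := (Finset.mem_filter.mp hi).2
      exact res_of_one p (by rw [this, h])
  have hle : ∑ i ∈ univ.filter (fun i => p i = p i0), res D p i ≤ 0 := by
    rcases lt_or_eq_of_le h0 with h | h
    · exact level_down p hp_mono hp_range hp_min _ h h1
    · refine Finset.sum_nonpos fun i hi => ?_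
      have := (Finset.mem_filter.mp hi).2
      exact res_of_zero p (by rw [this, ← h])
  linarith

include hp_mono hp_range hp_min in
lemma total_zero : ∑ i, res D p i = 0 := by
  rw [← Finset.sum_fiberwise_of_maps_to (g := p) (t := univ.image p)
      (fun i _ => Finset.mem_image_of_mem p (mem_univ i)) (res D p)]
  refine Finset.sum_eq_zero fun v hv => ?_
  obtain ⟨i, _, rfl⟩ := Finset.mem_image.mp hv
  exact level_zero p hp_mono hp_range hp_min _ ⟨i, rfl⟩

include hp_mono hp_range hp_min in
lemma tail_nonneg (k : Fin n) :
    0 ≤ ∑ i ∈ univ.filter (fun i => k ≤ i), res D p i := by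
  have hsplit := Finset.sum_filter_add_sum_filter_not
    (univ.filter (fun i => k ≤ i)) (fun i => p i < 1) (res D p)
  rw [Finset.filter_filter, Finset.filter_filter] at hsplit
  rw [← hsplit]
  have h1 := tail_up (D := D) p hp_mono hp_range hp_min k
  have h2 : 0 ≤ ∑ i ∈ univ.filter (fun i => k ≤ i ∧ ¬ p i < 1), res D p i := by
    refine Finset.sum_nonneg fun i hi => ?_
    obtain ⟨-, h⟩ := (Finset.mem_filter.mp hi).2
    exact res_of_one p (le_antisymm (hp_range i).2 (not_lt.mp h))
  linarith

include hp_mono hp_range hp_min in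
lemma correlation (hn : 1 ≤ n) (ξ : Fin n → ℝ) (hξ : Monotone ξ) :
    0 ≤ ∑ i, ξ i * res D p i := by
  set r := res D p with hr
  set g : ℕ → ℝ := fun j => ξ ⟨min j (n-1), by omega⟩ with hg
  have hgmono : Monotone g := by
    intro a b hab
    exact hξ (by simp only [Fin.mk_le_mk]; omega)
  have hgval : ∀ i : Fin n, g i.val = ξ i := by
    intro i
    simp only [hg]
    congr 1
    exact Fin.ext (by simp; omega)
  have step1 : ∑ i, ξ i * r i = ∑ i, (g i.val - g 0) * r i + g 0 * ∑ i, r i := by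
    rw [Finset.mul_sum, ← Finset.sum_add_distrib]
    refine Finset.sum_congr rfl fun i _ => ?_
    rw [← hgval i]; ring
  rw [step1, total_zero p hp_mono hp_range hp_min, mul_zero, add_zero]
  have step2 : ∀ i : Fin n, g i.val - g 0
      = ∑ j ∈ Finset.range (n-1), (if j < i.val then g (j+1) - g j else 0) := by
    intro i
    rw [← Finset.sum_filter]
    have hfe : (Finset.range (n-1)).filter (fun j => j < i.val) = Finset.range i.val := by
      ext j
      simp only [Finset.mem_filter, Finset.mem_range]
      omega
    rw [hfe, Finset.sum_range_sub g i.val]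
  calc (0:ℝ) ≤ ∑ j ∈ Finset.range (n-1), (g (j+1) - g j)
        * ∑ i ∈ univ.filter (fun i => j < i.val), r i := by
        refine Finset.sum_nonneg fun j hj => ?_
        have hjn : j + 1 < n := by
          have := Finset.mem_range.mp hj; omega
        have hfe : univ.filter (fun i : Fin n => j < i.val)
            = univ.filter (fun i => (⟨j+1, hjn⟩ : Fin n) ≤ i) := by
          apply Finset.filter_congr
          intro i _
          simp [Fin.le_def]
        refine mul_nonneg (sub_nonneg.mpr (hgmono (Nat.le_succ j))) ?_
        rw [hfe]
        exact tail_nonneg p hp_mono hp_range hp_min _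
    _ = ∑ j ∈ Finset.range (n-1), ∑ i, (if j < i.val then g (j+1) - g j else 0) * r i := by
        refine Finset.sum_congr rfl fun j _ => ?_
        rw [Finset.mul_sum, Finset.sum_filter]
        exact (Finset.sum_congr rfl fun i _ => by by_cases h : j < i.val <;> simp [h]).symm
    _ = ∑ i, ∑ j ∈ Finset.range (n-1), (if j < i.val then g (j+1) - g j else 0) * r i :=
        Finset.sum_comm
    _ = ∑ i, (g i.val - g 0) * r i := by
        refine Finset.sum_congr rfl fun i _ => ?_
        rw [step2 i, Finset.sum_mul]

end Helpers

/-- The isotonic regression (PAV) solution on a finite ordered domain is perfectly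
calibrated, and its residuals positively correlate with every monotone test function. -/
theorem pav_calibrated_and_positive_correlation
    (n : ℕ) (hn : 1 ≤ n)
    (D : Measure (Fin n × Bool)) [IsProbabilityMeasure D]
    (p : Fin n → ℝ) (hp_mono : Monotone p) (hp_range : ∀ i, p i ∈ Set.Icc (0:ℝ) 1)
    (hp_min : ∀ q : Fin n → ℝ, Monotone q → (∀ i, q i ∈ Set.Icc (0:ℝ) 1) →
      (∫ z, (p z.1 - label z.2)^2 ∂D) ≤ ∫ z, (q z.1 - label z.2)^2 ∂D) :
    (∀ v ∈ Set.range p, D {z | p z.1 = v} ≠ 0 →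
      (∫ z in {z | p z.1 = v}, label z.2 ∂D) = v * (D {z | p z.1 = v}).toReal) ∧
    (∀ ξ : Fin n → ℝ, Monotone ξ →
      0 ≤ ∫ z, (p z.1 - label z.2) * ξ z.1 ∂D) := by
  constructor
  · intro v hv _hne
    have hlz := level_zero (D := D) p hp_mono hp_range hp_min v hv
    have hDS : (D {z | p z.1 = v}).toReal
        = ∑ z : Fin n × Bool, (if z ∈ {z : Fin n × Bool | p z.1 = v} then (D {z}).toReal else 0) := by
      have h1 := setint_eq (D := D) {z : Fin n × Bool | p z.1 = v} (fun _ => (1:ℝ))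
      rw [setIntegral_const, smul_eq_mul, mul_one] at h1
      simp at h1; exact h1
    rw [setint_eq, hDS, Finset.mul_sum]
    have key : ∑ z : Fin n × Bool,
        (D {z}).toReal * ((p z.1 - label z.2) * (if p z.1 = v then 1 else 0)) = 0 := by
      refine Eq.trans (sum_res_eq (D := D) p (fun i => if p i = v then 1 else 0)) ?_
      rw [Finset.sum_filter] at hlz
      simpa [ite_mul] using hlz
    calc ∑ z : Fin n × Bool, (if z ∈ {z : Fin n × Bool | p z.1 = v} then (D {z}).toReal * label z.2 else 0)
        = ∑ z : Fin n × Bool, (v * (if z ∈ {z : Fin n × Bool | p z.1 = v} then (D {z}).toReal else 0)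
            - (D {z}).toReal * ((p z.1 - label z.2) * (if p z.1 = v then 1 else 0))) := by
          refine Finset.sum_congr rfl fun z _ => ?_
          by_cases hz : p z.1 = v
          · simp only [Set.mem_setOf_eq, hz, if_pos, ite_true]
            ring
          · simp [hz]
      _ = ∑ z : Fin n × Bool, v * (if z ∈ {z : Fin n × Bool | p z.1 = v} then (D {z}).toReal else 0)
            - ∑ z : Fin n × Bool, (D {z}).toReal * ((p z.1 - label z.2) * (if p z.1 = v then 1 else 0)) :=
          Finset.sum_sub_distrib _ _
      _ = _ := by rw [key, sub_zero]
  · intro ξ hξ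
    rw [int_eq, sum_res_eq]
    exact correlation p hp_mono hp_range hp_min hn ξ hξ
end

section
/- Let n ≥ 1 and let D be a probability distribution on [n] × {0,1}, where [n] = {1, …, n} with its natural order. Let p : [n] → [0,1] minimize E_{(x,y)∼D}[(q(x) − y)²] over all non-decreasing q : [n] → [0,1] (this is the Pool-Adjacent-Violators / isotonic regression solution). Then for every interval I ⊆ ℝ containing 0, every non-decreasing σ : I → [0,1], every g : [0,1] → I with σ(g(v)) = v for all v ∈ [0,1], and every non-decreasing c : [n] → I: E_{(x,y)∼D}[ℓ_{m,σ}(g(p(x)), y)] ≤ E_{(x,y)∼D}[ℓ_{m,σ}(c(x), y)]. In other words, p is an exact omnipredictor for all matching losses against the class of non-decreasing hypotheses. -/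
open MeasureTheory

/-- The matching loss `ℓ_{m,σ}(t,y) = ∫_0^t (σ(τ) - y) dτ` induced by a link function `σ`. -/
noncomputable def matchingLoss (σ : ℝ → ℝ) (t y : ℝ) : ℝ := ∫ τ in (0:ℝ)..t, (σ τ - y)

section Auxiliary

open Finset

/-- Abel summation with suffix sums. -/
lemma abel_sum_aux (n : ℕ) (r v : ℕ → ℝ) :
    ∑ i ∈ range n, r i * v i
      = ∑ k ∈ range n, (v k - if k = 0 then 0 else v (k-1)) * (∑ i ∈ Finset.Ico k n, r i) := by
  have htel : ∀ m, ∑ k ∈ range (m+1), (v k - if k = 0 then 0 else v (k-1)) = v m := by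
    intro m
    induction m with
    | zero => simp
    | succ m ih => rw [Finset.sum_range_succ, ih]; simp
  have hIco : ∀ k, (∑ i ∈ Finset.Ico k n, r i) = ∑ i ∈ range n, if k ≤ i then r i else 0 := by
    intro k
    rw [Finset.sum_ite, Finset.sum_const_zero, add_zero]
    apply Finset.sum_congr _ (fun _ _ => rfl)
    ext i; simp only [Finset.mem_filter, Finset.mem_range, Finset.mem_Ico]; tauto
  calc ∑ i ∈ range n, r i * v i
      = ∑ i ∈ range n, (∑ k ∈ range n, if k ≤ i then (v k - if k = 0 then 0 else v (k-1)) * r i else 0) := by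
        apply Finset.sum_congr rfl
        intro i hi
        have hi' : i < n := Finset.mem_range.mp hi
        rw [← Finset.sum_filter]
        have : (range n).filter (fun k => k ≤ i) = range (i+1) := by
          ext k; simp only [Finset.mem_filter, Finset.mem_range]; omega
        rw [this, ← Finset.sum_mul, htel i, mul_comm]
    _ = ∑ k ∈ range n, (v k - if k = 0 then 0 else v (k-1)) * (∑ i ∈ Finset.Ico k n, r i) := by
        rw [Finset.sum_comm]
        apply Finset.sum_congr rfl
        intro k _
        rw [hIco, Finset.mul_sum]
        apply Finset.sum_congr rfl
        intro i _
        split <;> simp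

/-- The combinatorial core: if all suffix sums of `r` are nonnegative, and suffix sums at
"jumps" of `p` are nonpositive, then `∑ r u ≤ ∑ r c` for `u` constant on level sets of `p`
and `c` non-decreasing. -/
lemma core_lemma (n : ℕ) (r p u c : ℕ → ℝ)
    (hR : ∀ j, 0 ≤ ∑ i ∈ Finset.Ico j n, r i)
    (hR' : ∀ k, k < n → (k = 0 ∨ p (k-1) < p k) → ∑ i ∈ Finset.Ico k n, r i ≤ 0)
    (hu : ∀ k, 0 < k → k < n → p (k-1) = p k → u (k-1) = u k)
    (hp : ∀ k, 0 < k → k < n → p (k-1) ≤ p k)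
    (hc : ∀ k, 0 < k → k < n → c (k-1) ≤ c k) :
    ∑ i ∈ range n, r i * u i ≤ ∑ i ∈ range n, r i * c i := by
  have hR0 : ∀ k, k < n → (k = 0 ∨ p (k-1) < p k) → ∑ i ∈ Finset.Ico k n, r i = 0 :=
    fun k hk h => le_antisymm (hR' k hk h) (hR k)
  rw [abel_sum_aux n r u, abel_sum_aux n r c]
  have hL : ∀ k ∈ range n, (u k - if k = 0 then 0 else u (k-1)) * (∑ i ∈ Finset.Ico k n, r i) = 0 := by
    intro k hk
    have hk' : k < n := mem_range.mp hk
    rcases Nat.eq_zero_or_pos k with h0 | hpos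
    · rw [hR0 k hk' (Or.inl h0), mul_zero]
    · rcases eq_or_lt_of_le (hp k hpos hk') with heq | hlt
      · rw [if_neg (Nat.pos_iff_ne_zero.mp hpos), hu k hpos hk' heq, sub_self, zero_mul]
      · rw [hR0 k hk' (Or.inr hlt), mul_zero]
  have hRc : ∀ k ∈ range n, 0 ≤ (c k - if k = 0 then 0 else c (k-1)) * (∑ i ∈ Finset.Ico k n, r i) := by
    intro k hk
    have hk' : k < n := mem_range.mp hk
    rcases Nat.eq_zero_or_pos k with h0 | hpos
    · rw [hR0 k hk' (Or.inl h0), mul_zero]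
    · rw [if_neg (Nat.pos_iff_ne_zero.mp hpos)]
      exact mul_nonneg (sub_nonneg.mpr (hc k hpos hk')) (hR k)
  calc ∑ k ∈ range n, (u k - if k = 0 then 0 else u (k-1)) * (∑ i ∈ Finset.Ico k n, r i)
      = 0 := Finset.sum_eq_zero hL
    _ ≤ _ := Finset.sum_nonneg hRc

/-- A bound on the integral of a monotone function in terms of its value at the endpoint. -/
lemma int_bound (I : Set ℝ) (hI : I.OrdConnected) (σ : ℝ → ℝ) (hσ : MonotoneOn σ I)
    (s t v : ℝ) (hs : s ∈ I) (ht : t ∈ I) (hv : σ t = v) :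
    (∫ τ in s..t, σ τ) ≤ (t - s) * v := by
  have hsub : Set.uIcc s t ⊆ I := hI.uIcc_subset hs ht
  have hint : IntervalIntegrable σ volume s t := (hσ.mono hsub).intervalIntegrable
  rcases le_total s t with h | h
  · have hle : ∀ x ∈ Set.Icc s t, σ x ≤ v := by
      intro x hx
      have hxI : x ∈ I := hsub (by rw [Set.uIcc_of_le h]; exact hx)
      calc σ x ≤ σ t := hσ hxI ht hx.2
        _ = v := hv
    have := intervalIntegral.integral_mono_on h hint intervalIntegrable_const hle
    simpa using this
  · have hint' : IntervalIntegrable σ volume t s := hint.symm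
    have hle : ∀ x ∈ Set.Icc t s, v ≤ σ x := by
      intro x hx
      have hxI : x ∈ I := hsub (by rw [Set.uIcc_of_ge h]; exact hx)
      calc v = σ t := hv.symm
        _ ≤ σ x := hσ ht hxI hx.1
    have h2 := intervalIntegral.integral_mono_on h intervalIntegrable_const hint' hle
    rw [intervalIntegral.integral_symm]
    have h3 : (s - t) * v ≤ ∫ τ in t..s, σ τ := by simpa using h2
    nlinarith [h3]

/-- The point mass of a measure on the discrete space `Fin n × Bool`, as a real number. -/
noncomputable def wt (n : ℕ) (D : Measure (Fin n × Bool)) (z : Fin n × Bool) : ℝ := (D {z}).toReal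

/-- The "residual" `μ_i p_i - a_i` of the predictor `p` at point `i`. -/
noncomputable def rr (n : ℕ) (D : Measure (Fin n × Bool)) (p : Fin n → ℝ) (i : Fin n) : ℝ :=
  (wt n D (i, true) + wt n D (i, false)) * p i - wt n D (i, true)

/-- Integrals over the finite discrete space `Fin n × Bool` are weighted sums. -/
lemma intsum (n : ℕ) (D : Measure (Fin n × Bool)) [IsProbabilityMeasure D] (f : Fin n × Bool → ℝ) :
    ∫ z, f z ∂D = ∑ z : Fin n × Bool, wt n D z * f z := by
  rw [integral_fintype (hf := .of_finite)]
  simp [wt, smul_eq_mul, Measure.real]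

/-- First-order optimality (KKT) condition for the isotonic regression solution. -/
lemma kkt (n : ℕ) (D : Measure (Fin n × Bool)) [IsProbabilityMeasure D]
    (p : Fin n → ℝ) (hp_mono : Monotone p) (hp_range : ∀ i, p i ∈ Set.Icc (0:ℝ) 1)
    (hp_min : ∀ q : Fin n → ℝ, Monotone q → (∀ i, q i ∈ Set.Icc (0:ℝ) 1) →
      (∫ z, (p z.1 - label z.2)^2 ∂D) ≤ ∫ z, (q z.1 - label z.2)^2 ∂D)
    (q : Fin n → ℝ) (hq : Monotone q) (hqr : ∀ i, q i ∈ Set.Icc (0:ℝ) 1) :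
    0 ≤ ∑ i : Fin n, rr n D p i * (q i - p i) := by
  classical
  set w : Fin n × Bool → ℝ := wt n D with hw
  have hw_nonneg : ∀ z, 0 ≤ w z := fun z => ENNReal.toReal_nonneg
  set L := ∑ i : Fin n, rr n D p i * (q i - p i) with hL
  set Q := ∑ z : Fin n × Bool, w z * (q z.1 - p z.1)^2 with hQ
  have hQ0 : 0 ≤ Q := Finset.sum_nonneg fun z _ => mul_nonneg (hw_nonneg z) (sq_nonneg _)
  have hcross : ∑ z : Fin n × Bool, w z * ((q z.1 - p z.1) * (p z.1 - label z.2)) = L := by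
    rw [hL, Fintype.sum_prod_type]
    apply Finset.sum_congr rfl
    intro i _
    rw [Fintype.sum_bool]
    simp only [label, rr, hw, Bool.false_eq_true, if_true, if_false]
    ring
  have key : ∀ ε : ℝ, 0 < ε → ε ≤ 1 → 0 ≤ ε^2 * Q + 2*ε*L := by
    intro ε hε hε1
    have hmono : Monotone (fun i => p i + ε * (q i - p i)) := by
      intro i j hij
      have h1 := hp_mono hij
      have h2 := hq hij
      dsimp only
      nlinarith
    have hrange : ∀ i, p i + ε * (q i - p i) ∈ Set.Icc (0:ℝ) 1 := by
      intro i
      obtain ⟨h1, h2⟩ := hp_range i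
      obtain ⟨h3, h4⟩ := hqr i
      constructor <;> nlinarith
    have hmin := hp_min _ hmono hrange
    rw [intsum, intsum] at hmin
    have hptw : ∀ z : Fin n × Bool,
        w z * (p z.1 + ε * (q z.1 - p z.1) - label z.2)^2
          = w z * (p z.1 - label z.2)^2 + ε^2 * (w z * (q z.1 - p z.1)^2)
            + 2*ε*(w z * ((q z.1 - p z.1) * (p z.1 - label z.2))) := fun z => by ring
    have hsum : ∑ z : Fin n × Bool, w z * (p z.1 + ε * (q z.1 - p z.1) - label z.2)^2
        = (∑ z : Fin n × Bool, w z * (p z.1 - label z.2)^2) + ε^2 * Q + 2*ε*L := by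
      simp_rw [hptw]
      rw [Finset.sum_add_distrib, Finset.sum_add_distrib, ← Finset.mul_sum, ← Finset.mul_sum,
        hcross, ← hQ]
    rw [hsum] at hmin
    linarith
  by_contra hcon
  push_neg at hcon
  have hLneg : L < 0 := hcon
  set ε := min 1 (-L / (Q + 1)) with hε_def
  have hεpos : 0 < ε := lt_min one_pos (div_pos (by linarith) (by linarith))
  have hε1 : ε ≤ 1 := min_le_left _ _
  have h2 := key ε hεpos hε1
  have hεle : ε ≤ -L / (Q + 1) := min_le_right _ _
  have hεQ : ε * Q ≤ -L := by
    calc ε * Q ≤ (-L / (Q + 1)) * Q := mul_le_mul_of_nonneg_right hεle hQ0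
      _ ≤ -L := by
        rw [div_mul_eq_mul_div, div_le_iff₀ (by linarith)]
        nlinarith
  nlinarith

/-- Suffix sums of the residuals are nonnegative. -/
lemma suffix_nonneg (n : ℕ) (p r : Fin n → ℝ) (hp_mono : Monotone p)
    (hp_range : ∀ i, p i ∈ Set.Icc (0:ℝ) 1)
    (hKKT : ∀ q : Fin n → ℝ, Monotone q → (∀ i, q i ∈ Set.Icc (0:ℝ) 1) →
      0 ≤ ∑ i : Fin n, r i * (q i - p i))
    (hr1 : ∀ i, p i = 1 → 0 ≤ r i) (j : ℕ) :
    0 ≤ ∑ i ∈ Finset.univ.filter (fun i : Fin n => j ≤ (i:ℕ)), r i := by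
  classical
  set A := Finset.univ.filter (fun i : Fin n => j ≤ (i:ℕ)) with hA
  rw [← Finset.sum_filter_add_sum_filter_not A (fun i => p i < 1) r]
  have h2 : 0 ≤ ∑ i ∈ A.filter (fun i => ¬ p i < 1), r i := by
    apply Finset.sum_nonneg
    intro i hi
    exact hr1 i (le_antisymm (hp_range i).2 (not_lt.mp (Finset.mem_filter.mp hi).2))
  have h1 : 0 ≤ ∑ i ∈ A.filter (fun i => p i < 1), r i := by
    by_cases hne : (Finset.univ.filter (fun i : Fin n => p i < 1)).Nonempty
    · set ε := (Finset.univ.filter (fun i : Fin n => p i < 1)).inf' hne (fun i => 1 - p i) with hε_def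
      have hε : 0 < ε := by
        rw [hε_def, Finset.lt_inf'_iff]
        intro i hi
        have := (Finset.mem_filter.mp hi).2
        linarith
      have hεle : ∀ i : Fin n, p i < 1 → ε ≤ 1 - p i := fun i hi =>
        Finset.inf'_le (fun i => 1 - p i) (Finset.mem_filter.mpr ⟨Finset.mem_univ i, hi⟩)
      set q : Fin n → ℝ := fun i => if j ≤ (i:ℕ) then min (p i + ε) 1 else p i with hq_def
      have hqmono : Monotone q := by
        intro i k hik
        have hik' : (i:ℕ) ≤ (k:ℕ) := hik
        have hpik := hp_mono hik
        simp only [hq_def]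
        by_cases hji : j ≤ (i:ℕ)
        · rw [if_pos hji, if_pos (le_trans hji hik')]
          exact min_le_min (by linarith) le_rfl
        · rw [if_neg hji]
          by_cases hjk : j ≤ (k:ℕ)
          · rw [if_pos hjk]
            exact le_min (by linarith) (hp_range i).2
          · rw [if_neg hjk]; exact hpik
      have hqrange : ∀ i, q i ∈ Set.Icc (0:ℝ) 1 := by
        intro i
        simp only [hq_def]
        split
        · exact ⟨le_min (by linarith [(hp_range i).1]) zero_le_one, min_le_right _ _⟩
        · exact hp_range i
      have hK := hKKT q hqmono hqrange
      have hqp : ∀ i : Fin n, q i - p i = if j ≤ (i:ℕ) then min ε (1 - p i) else 0 := by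
        intro i
        simp only [hq_def]
        split
        · rcases le_total (p i + ε) 1 with h | h
          · rw [min_eq_left h, min_eq_left (by linarith)]; ring
          · rw [min_eq_right h, min_eq_right (by linarith)]
        · ring
      have hsum : ∑ i : Fin n, r i * (q i - p i)
          = ε * ∑ i ∈ A.filter (fun i => p i < 1), r i := by
        simp only [hqp, mul_ite, mul_zero]
        rw [← Finset.sum_filter, ← hA,
          ← Finset.sum_filter_add_sum_filter_not A (fun i => p i < 1) (fun i => r i * min ε (1 - p i))]
        have e1 : ∑ i ∈ A.filter (fun i => p i < 1), r i * min ε (1 - p i)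
            = ∑ i ∈ A.filter (fun i => p i < 1), ε * r i := by
          apply Finset.sum_congr rfl
          intro i hi
          rw [min_eq_left (hεle i (Finset.mem_filter.mp hi).2)]; ring
        have e2 : ∑ i ∈ A.filter (fun i => ¬ p i < 1), r i * min ε (1 - p i) = 0 := by
          apply Finset.sum_eq_zero
          intro i hi
          have : p i = 1 := le_antisymm (hp_range i).2 (not_lt.mp (Finset.mem_filter.mp hi).2)
          rw [this]
          simp [min_eq_right hε.le]
        rw [e1, e2, ← Finset.mul_sum, add_zero]
      rw [hsum] at hK
      by_contra hcon
      push_neg at hcon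
      nlinarith
    · have : A.filter (fun i => p i < 1) = ∅ := by
        apply Finset.eq_empty_of_forall_notMem
        intro i hi
        exact hne ⟨i, Finset.mem_filter.mpr ⟨Finset.mem_univ _, (Finset.mem_filter.mp hi).2⟩⟩
      rw [this, Finset.sum_empty]
  linarith

/-- Suffix sums of the residuals at jumps of `p` are nonpositive. -/
lemma suffix_nonpos (n : ℕ) (p r : Fin n → ℝ) (hp_mono : Monotone p)
    (hp_range : ∀ i, p i ∈ Set.Icc (0:ℝ) 1)
    (hKKT : ∀ q : Fin n → ℝ, Monotone q → (∀ i, q i ∈ Set.Icc (0:ℝ) 1) →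
      0 ≤ ∑ i : Fin n, r i * (q i - p i))
    (k : ℕ) (pstar : ℝ) (h0 : 0 ≤ pstar) (h1 : pstar ≤ 1)
    (hlt : ∀ i : Fin n, (i:ℕ) < k → p i ≤ pstar)
    (hge : ∀ i : Fin n, k ≤ (i:ℕ) → pstar ≤ p i)
    (heq : ∀ i : Fin n, k ≤ (i:ℕ) → p i = pstar → r i ≤ 0) :
    ∑ i ∈ Finset.univ.filter (fun i : Fin n => k ≤ (i:ℕ)), r i ≤ 0 := by
  classical
  set A := Finset.univ.filter (fun i : Fin n => k ≤ (i:ℕ)) with hA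
  rw [← Finset.sum_filter_add_sum_filter_not A (fun i => pstar < p i) r]
  have h2 : ∑ i ∈ A.filter (fun i => ¬ pstar < p i), r i ≤ 0 := by
    apply Finset.sum_nonpos
    intro i hi
    obtain ⟨hiA, hile⟩ := Finset.mem_filter.mp hi
    have hik : k ≤ (i:ℕ) := (Finset.mem_filter.mp hiA).2
    exact heq i hik (le_antisymm (not_lt.mp hile) (hge i hik))
  have h1' : ∑ i ∈ A.filter (fun i => pstar < p i), r i ≤ 0 := by
    by_cases hne : (Finset.univ.filter (fun i : Fin n => pstar < p i)).Nonempty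
    · set ε := (Finset.univ.filter (fun i : Fin n => pstar < p i)).inf' hne (fun i => p i - pstar) with hε_def
      have hε : 0 < ε := by
        rw [hε_def, Finset.lt_inf'_iff]
        intro i hi
        have := (Finset.mem_filter.mp hi).2
        linarith
      have hεle : ∀ i : Fin n, pstar < p i → ε ≤ p i - pstar := fun i hi =>
        Finset.inf'_le (fun i => p i - pstar) (Finset.mem_filter.mpr ⟨Finset.mem_univ i, hi⟩)
      set q : Fin n → ℝ := fun i => if k ≤ (i:ℕ) then max (p i - ε) pstar else p i with hq_def
      have hqmono : Monotone q := by
        intro i m him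
        have him' : (i:ℕ) ≤ (m:ℕ) := him
        have hpim := hp_mono him
        simp only [hq_def]
        by_cases hki : k ≤ (i:ℕ)
        · rw [if_pos hki, if_pos (le_trans hki him')]
          exact max_le_max (by linarith) le_rfl
        · rw [if_neg hki]
          by_cases hkm : k ≤ (m:ℕ)
          · rw [if_pos hkm]
            exact le_trans (hlt i (not_le.mp hki)) (le_max_right _ _)
          · rw [if_neg hkm]; exact hpim
      have hqrange : ∀ i, q i ∈ Set.Icc (0:ℝ) 1 := by
        intro i
        simp only [hq_def]
        split
        · exact ⟨le_trans h0 (le_max_right _ _), max_le (by linarith [(hp_range i).2]) h1⟩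
        · exact hp_range i
      have hK := hKKT q hqmono hqrange
      have hqp : ∀ i : Fin n, q i - p i = if k ≤ (i:ℕ) then -(min ε (p i - pstar)) else 0 := by
        intro i
        simp only [hq_def]
        split
        · rcases le_total (p i - ε) pstar with h | h
          · rw [max_eq_right h, min_eq_right (by linarith)]; ring
          · rw [max_eq_left h, min_eq_left (by linarith)]; ring
        · ring
      have hsum : ∑ i : Fin n, r i * (q i - p i)
          = -(ε * ∑ i ∈ A.filter (fun i => pstar < p i), r i) := by
        simp only [hqp, mul_ite, mul_zero]
        rw [← Finset.sum_filter, ← hA,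
          ← Finset.sum_filter_add_sum_filter_not A (fun i => pstar < p i)
            (fun i => r i * -(min ε (p i - pstar)))]
        have e1 : ∑ i ∈ A.filter (fun i => pstar < p i), r i * -(min ε (p i - pstar))
            = ∑ i ∈ A.filter (fun i => pstar < p i), -(ε * r i) := by
          apply Finset.sum_congr rfl
          intro i hi
          rw [min_eq_left (hεle i (Finset.mem_filter.mp hi).2)]; ring
        have e2 : ∑ i ∈ A.filter (fun i => ¬ pstar < p i), r i * -(min ε (p i - pstar)) = 0 := by
          apply Finset.sum_eq_zero
          intro i hi
          obtain ⟨hiA, hile⟩ := Finset.mem_filter.mp hi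
          have hik : k ≤ (i:ℕ) := (Finset.mem_filter.mp hiA).2
          have : p i = pstar := le_antisymm (not_lt.mp hile) (hge i hik)
          rw [this]
          simp [min_eq_right hε.le]
        rw [e1, e2, Finset.sum_neg_distrib, ← Finset.mul_sum, add_zero]
      rw [hsum] at hK
      by_contra hcon
      push_neg at hcon
      nlinarith
    · have : A.filter (fun i => pstar < p i) = ∅ := by
        apply Finset.eq_empty_of_forall_notMem
        intro i hi
        exact hne ⟨i, Finset.mem_filter.mpr ⟨Finset.mem_univ _, (Finset.mem_filter.mp hi).2⟩⟩
      rw [this, Finset.sum_empty]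
  linarith

end Auxiliary

/-- The isotonic regression (PAV) solution on a finite ordered domain is an exact
omnipredictor for all matching losses against the class of non-decreasing hypotheses. -/
theorem pav_exact_omnipredictor
    (n : ℕ) (hn : 1 ≤ n)
    (D : Measure (Fin n × Bool)) [IsProbabilityMeasure D]
    (p : Fin n → ℝ) (hp_mono : Monotone p) (hp_range : ∀ i, p i ∈ Set.Icc (0:ℝ) 1)
    (hp_min : ∀ q : Fin n → ℝ, Monotone q → (∀ i, q i ∈ Set.Icc (0:ℝ) 1) →
      (∫ z, (p z.1 - label z.2)^2 ∂D) ≤ ∫ z, (q z.1 - label z.2)^2 ∂D)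
    (I : Set ℝ) (hI : I.OrdConnected) (h0I : (0:ℝ) ∈ I)
    (σ : ℝ → ℝ) (hσ_mono : MonotoneOn σ I)
    (hσ_range : ∀ t ∈ I, σ t ∈ Set.Icc (0:ℝ) 1)
    (g : ℝ → ℝ) (hg_range : ∀ v ∈ Set.Icc (0:ℝ) 1, g v ∈ I)
    (hσg : ∀ v ∈ Set.Icc (0:ℝ) 1, σ (g v) = v)
    (c : Fin n → ℝ) (hc_mono : Monotone c) (hc_range : ∀ i, c i ∈ I) :
    (∫ z, matchingLoss σ (g (p z.1)) (label z.2) ∂D)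
      ≤ ∫ z, matchingLoss σ (c z.1) (label z.2) ∂D := by
  classical
  set r : Fin n → ℝ := rr n D p with hr_def
  set u : Fin n → ℝ := fun i => g (p i) with hu_def
  have hw_nonneg : ∀ z, 0 ≤ wt n D z := fun z => ENNReal.toReal_nonneg
  have hKKT := kkt n D p hp_mono hp_range hp_min
  -- residual sign facts at the boundary values of p
  have hr1 : ∀ i, p i = 1 → 0 ≤ r i := by
    intro i hpi
    simp only [hr_def, rr, hpi, mul_one]
    have := hw_nonneg (i, false)
    linarith
  have hr0 : ∀ i, p i = 0 → r i ≤ 0 := by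
    intro i hpi
    simp only [hr_def, rr, hpi, mul_zero]
    have := hw_nonneg (i, true)
    linarith
  -- natural-number-indexed versions
  set rn : ℕ → ℝ := fun m => if h : m < n then r ⟨m, h⟩ else 0 with hrn_def
  set pn : ℕ → ℝ := fun m => if h : m < n then p ⟨m, h⟩ else 0 with hpn_def
  set un : ℕ → ℝ := fun m => if h : m < n then u ⟨m, h⟩ else 0 with hun_def
  set cn : ℕ → ℝ := fun m => if h : m < n then c ⟨m, h⟩ else 0 with hcn_def
  have hconv : ∀ j : ℕ, ∑ i ∈ Finset.Ico j n, rn i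
      = ∑ i ∈ Finset.univ.filter (fun i : Fin n => j ≤ (i:ℕ)), r i := by
    intro j
    rw [Finset.sum_filter]
    have h1 : ∀ i : Fin n, (if j ≤ (i:ℕ) then r i else 0)
        = (fun m => if j ≤ m then rn m else 0) (i:ℕ) := by
      intro i
      simp only [hrn_def, i.isLt, dif_pos, Fin.eta]
    calc ∑ i ∈ Finset.Ico j n, rn i
        = ∑ m ∈ Finset.range n, if j ≤ m then rn m else 0 := by
          rw [Finset.sum_ite, Finset.sum_const_zero, add_zero]
          apply Finset.sum_congr _ (fun _ _ => rfl)
          ext m; simp [Finset.mem_Ico]; tauto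
      _ = ∑ i : Fin n, (if j ≤ (i:ℕ) then r i else 0) := by
          rw [← Fin.sum_univ_eq_sum_range (fun m => if j ≤ m then rn m else 0) n]
          exact Finset.sum_congr rfl fun i _ => (h1 i).symm
  have hsum_conv : ∀ f : Fin n → ℝ,
      ∑ m ∈ Finset.range n, rn m * (if h : m < n then f ⟨m, h⟩ else 0) = ∑ i : Fin n, r i * f i := by
    intro f
    rw [← Fin.sum_univ_eq_sum_range (fun m => rn m * (if h : m < n then f ⟨m, h⟩ else 0)) n]
    apply Finset.sum_congr rfl
    intro i _
    simp only [hrn_def, i.isLt, dif_pos, Fin.eta]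
  -- hypotheses for the combinatorial core lemma
  have hR : ∀ j, 0 ≤ ∑ i ∈ Finset.Ico j n, rn i := by
    intro j
    rw [hconv j]
    exact suffix_nonneg n p r hp_mono hp_range hKKT hr1 j
  have hR' : ∀ k, k < n → (k = 0 ∨ pn (k-1) < pn k) → ∑ i ∈ Finset.Ico k n, rn i ≤ 0 := by
    intro k hk hcase
    rw [hconv k]
    by_cases hk0 : k = 0
    · subst hk0
      exact suffix_nonpos n p r hp_mono hp_range hKKT 0 0 le_rfl zero_le_one
        (fun i hi => absurd hi (by omega))
        (fun i _ => (hp_range i).1)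
        (fun i _ hpi => hr0 i hpi)
    · have hk1 : k - 1 < n := by omega
      have hlt : pn (k-1) < pn k := by
        rcases hcase with h | h
        · exact absurd h hk0
        · exact h
      rw [hpn_def] at hlt
      simp only [hk1, hk, dif_pos] at hlt
      set pstar := p ⟨k-1, hk1⟩ with hpstar
      refine suffix_nonpos n p r hp_mono hp_range hKKT k pstar (hp_range _).1 (hp_range _).2
        ?_ ?_ ?_
      · intro i hi
        exact hp_mono (show i ≤ ⟨k-1, hk1⟩ from by rw [Fin.le_def]; simp; omega)
      · intro i hi
        exact le_trans hlt.le (hp_mono (show (⟨k, hk⟩ : Fin n) ≤ i from by rw [Fin.le_def]; simpa))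
      · intro i hi hpi
        exfalso
        have : pstar < p i :=
          lt_of_lt_of_le hlt (hp_mono (show (⟨k, hk⟩ : Fin n) ≤ i from by rw [Fin.le_def]; simpa))
        rw [hpi] at this
        exact lt_irrefl _ this
  have hun_eq : ∀ k, 0 < k → k < n → pn (k-1) = pn k → un (k-1) = un k := by
    intro k hk0 hk hpe
    have hk1 : k - 1 < n := by omega
    rw [hpn_def] at hpe
    simp only [hk1, hk, dif_pos] at hpe
    rw [hun_def]
    simp only [hk1, hk, dif_pos, hu_def]
    rw [hpe]
  have hpn_mono : ∀ k, 0 < k → k < n → pn (k-1) ≤ pn k := by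
    intro k hk0 hk
    have hk1 : k - 1 < n := by omega
    rw [hpn_def]
    simp only [hk1, hk, dif_pos]
    exact hp_mono (show (⟨k-1, hk1⟩ : Fin n) ≤ ⟨k, hk⟩ from by rw [Fin.le_def]; simp)
  have hcn_mono : ∀ k, 0 < k → k < n → cn (k-1) ≤ cn k := by
    intro k hk0 hk
    have hk1 : k - 1 < n := by omega
    rw [hcn_def]
    simp only [hk1, hk, dif_pos]
    exact hc_mono (show (⟨k-1, hk1⟩ : Fin n) ≤ ⟨k, hk⟩ from by rw [Fin.le_def]; simp)
  have hcore := core_lemma n rn pn un cn hR hR' hun_eq hpn_mono hcn_mono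
  have hcore' : ∑ i : Fin n, r i * u i ≤ ∑ i : Fin n, r i * c i := by
    have e1 : ∑ m ∈ Finset.range n, rn m * un m = ∑ i : Fin n, r i * u i := hsum_conv u
    have e2 : ∑ m ∈ Finset.range n, rn m * cn m = ∑ i : Fin n, r i * c i := hsum_conv c
    rw [← e1, ← e2]
    exact hcore
  -- the per-point bound
  have hbound : ∀ i : Fin n,
      (wt n D (i, true) * matchingLoss σ (u i) 1 + wt n D (i, false) * matchingLoss σ (u i) 0)
        - (wt n D (i, true) * matchingLoss σ (c i) 1 + wt n D (i, false) * matchingLoss σ (c i) 0)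
      ≤ r i * (u i - c i) := by
    intro i
    have huI : u i ∈ I := hg_range _ (hp_range i)
    have hcI : c i ∈ I := hc_range i
    have hIA : IntervalIntegrable σ volume 0 (u i) :=
      (hσ_mono.mono (hI.uIcc_subset h0I huI)).intervalIntegrable
    have hIB : IntervalIntegrable σ volume 0 (c i) :=
      (hσ_mono.mono (hI.uIcc_subset h0I hcI)).intervalIntegrable
    have hML : ∀ t : ℝ, IntervalIntegrable σ volume 0 t → ∀ y : ℝ,
        matchingLoss σ t y = (∫ τ in (0:ℝ)..t, σ τ) - t * y := by
      intro t ht y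
      have : matchingLoss σ t y = ∫ τ in (0:ℝ)..t, (σ τ - y) := rfl
      rw [this, intervalIntegral.integral_sub ht intervalIntegrable_const,
        intervalIntegral.integral_const]
      simp [smul_eq_mul]
    have hAB : (∫ τ in (0:ℝ)..(u i), σ τ) - (∫ τ in (0:ℝ)..(c i), σ τ)
        = ∫ τ in (c i)..(u i), σ τ := intervalIntegral.integral_interval_sub_left hIA hIB
    have hib : (∫ τ in (c i)..(u i), σ τ) ≤ (u i - c i) * p i :=
      int_bound I hI σ hσ_mono _ _ _ hcI huI (hσg _ (hp_range i))
    have hμ : 0 ≤ wt n D (i, true) + wt n D (i, false) :=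
      add_nonneg (hw_nonneg _) (hw_nonneg _)
    have hmul := mul_le_mul_of_nonneg_left hib hμ
    rw [hML _ hIA 1, hML _ hIA 0, hML _ hIB 1, hML _ hIB 0]
    simp only [hr_def, rr]
    nlinarith [hmul, hAB]
  -- assemble
  rw [intsum n D (fun z => matchingLoss σ (g (p z.1)) (label z.2)),
    intsum n D (fun z => matchingLoss σ (c z.1) (label z.2))]
  rw [Fintype.sum_prod_type, Fintype.sum_prod_type]
  simp only [Fintype.sum_bool, label, Bool.false_eq_true, if_true, if_false]
  have h1 : ∑ i : Fin n,
      ((wt n D (i, true) * matchingLoss σ (u i) 1 + wt n D (i, false) * matchingLoss σ (u i) 0)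
        - (wt n D (i, true) * matchingLoss σ (c i) 1 + wt n D (i, false) * matchingLoss σ (c i) 0))
      ≤ ∑ i : Fin n, r i * (u i - c i) := Finset.sum_le_sum fun i _ => hbound i
  rw [Finset.sum_sub_distrib] at h1
  have h2 : ∑ i : Fin n, r i * (u i - c i)
      = (∑ i : Fin n, r i * u i) - ∑ i : Fin n, r i * c i := by
    rw [← Finset.sum_sub_distrib]
    exact Finset.sum_congr rfl fun i _ => by ring
  rw [h2] at h1
  have := sub_nonpos.mpr hcore'
  simp only [hu_def] at h1
  linarith [h1]
end
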